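/- arXiv:1709.10505 — 7 statements merged into one kernel-verified Lean document; each statement's English description precedes it below -/
import Mathlib

section
/- Fix x ∈ ℝ. Assume f is bounded on ℝ and continuous at x, and ∫ K(u)² du < ∞. If (h_n) is a sequence of bandwidths with h_n → 0 and n h_n → ∞, then Var(f̂_{n,h_n}(x)) = (1/(n h_n)) f(x) ∫ K(u)² du + o(1/(n h_n)) as n → ∞. -/
/-!
The summands `K((x - X_i)/h)` are i.i.d. and bounded, and the substitution `y = x - h u` turns
their first two moments into `h B(h)` and `h A(h)` with `A(h) = ∫ K(u)² f(x - h u) du` and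
`B(h) = ∫ K(u) f(x - h u) du`. Hence, exactly,
`Var f̂_{n,h}(x) = (1/(nh)) (A(h) - h B(h)²)`. As `h → 0`, dominated convergence (`f` bounded and
continuous at `x`) gives `A(h) → f(x) ∫ K²` while `B(h)` converges, so `h B(h)² → 0`.
-/

open MeasureTheory ProbabilityTheory Filter Asymptotics Topology

/-- The kernel density estimator `f̂_{n,h}(x) = (1/(nh)) Σ_{i<n} K((x - X_i)/h)`. -/
noncomputable def kde {Ω : Type*} (K : ℝ → ℝ) (X : ℕ → Ω → ℝ)
    (n : ℕ) (h x : ℝ) (ω : Ω) : ℝ :=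
  (1 / (n * h)) * ∑ i ∈ Finset.range n, K ((x - X i ω) / h)

/-- `∫ g(u) f(x - t u) du`, i.e. `(g_t ⋆ f)(x)` for the rescaled kernel `g_t = t⁻¹ g(·/t)`. -/
noncomputable def kernelAverage (g f : ℝ → ℝ) (x t : ℝ) : ℝ :=
  ∫ u, g u * f (x - t * u)

lemma integral_mul_comp_sub_div (F g : ℝ → ℝ) (x : ℝ) {h : ℝ} (hh : 0 < h) :
    ∫ y, F y * g ((x - y) / h) = h * kernelAverage g F x h := by
  have hscale := Measure.integral_comp_mul_left (fun z => F (x - z) * g (z / h)) h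
  simp only [mul_div_cancel_left₀ _ hh.ne', abs_of_pos (inv_pos.2 hh), smul_eq_mul] at hscale
  rw [← integral_sub_left_eq_self _ volume x, kernelAverage]
  simp_rw [sub_sub_cancel, mul_comm (g _), hscale, ← mul_assoc, mul_inv_cancel₀ hh.ne', one_mul]

section Density

variable {Ω : Type*} [MeasurableSpace Ω] {P : Measure Ω} {Z : Ω → ℝ} {f : ℝ → ℝ}

lemma integral_comp_eq_integral_density_mul (hZ : Measurable Z) (hf : Measurable f)
    (hf_nonneg : ∀ y, 0 ≤ f y)
    (hlaw : P.map Z = volume.withDensity fun y => ENNReal.ofReal (f y))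
    {φ : ℝ → ℝ} (hφ : Measurable φ) :
    ∫ ω, φ (Z ω) ∂P = ∫ y, f y * φ y := by
  rw [← integral_map hZ.aemeasurable hφ.aestronglyMeasurable, hlaw,
    integral_withDensity_eq_integral_toReal_smul hf.ennreal_ofReal
      (ae_of_all _ fun _ => ENNReal.ofReal_lt_top)]
  simp only [ENNReal.toReal_ofReal (hf_nonneg _), smul_eq_mul]

lemma integral_kernel_comp_eq (hZ : Measurable Z) (hf : Measurable f)
    (hf_nonneg : ∀ y, 0 ≤ f y)
    (hlaw : P.map Z = volume.withDensity fun y => ENNReal.ofReal (f y))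
    {g : ℝ → ℝ} (hg : Measurable g) (x : ℝ) {h : ℝ} (hh : 0 < h) :
    ∫ ω, g ((x - Z ω) / h) ∂P = h * kernelAverage g f x h := by
  rw [integral_comp_eq_integral_density_mul hZ hf hf_nonneg hlaw
    (φ := fun y => g ((x - y) / h)) (by fun_prop), integral_mul_comp_sub_div f g x hh]

lemma memLp_kernel_comp [IsFiniteMeasure P] (hZ : Measurable Z) {K : ℝ → ℝ} (hK : Measurable K)
    {M : ℝ} (hKM : ∀ u, |K u| ≤ M) (p : ENNReal) (x h : ℝ) :
    MemLp (fun ω => K ((x - Z ω) / h)) p P :=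
  MemLp.of_bound (by fun_prop : Measurable fun ω => K ((x - Z ω) / h)).aestronglyMeasurable M
    (ae_of_all _ fun _ => hKM _)

lemma variance_kernel_comp [IsProbabilityMeasure P] (hZ : Measurable Z) (hf : Measurable f)
    (hf_nonneg : ∀ y, 0 ≤ f y)
    (hlaw : P.map Z = volume.withDensity fun y => ENNReal.ofReal (f y))
    {K : ℝ → ℝ} (hK : Measurable K) {M : ℝ} (hKM : ∀ u, |K u| ≤ M) (x : ℝ) {h : ℝ} (hh : 0 < h) :
    variance (fun ω => K ((x - Z ω) / h)) P
      = h * kernelAverage (fun u => K u ^ 2) f x h - (h * kernelAverage K f x h) ^ 2 := by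
  rw [variance_eq_sub (memLp_kernel_comp hZ hK hKM 2 x h)]
  simp only [Pi.pow_apply]
  rw [integral_kernel_comp_eq hZ hf hf_nonneg hlaw (hK.pow_const 2) x hh,
    integral_kernel_comp_eq hZ hf hf_nonneg hlaw hK x hh]

end Density

lemma tendsto_kernelAverage {ι : Type*} {l : Filter ι} [l.IsCountablyGenerated] {t : ι → ℝ}
    (ht : Tendsto t l (𝓝 0)) {g f : ℝ → ℝ} (hg : Integrable g) (hf : Measurable f) {M : ℝ}
    (hfM : ∀ y, |f y| ≤ M) {x : ℝ} (hfx : ContinuousAt f x) :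
    Tendsto (fun i => kernelAverage g f x (t i)) l (𝓝 ((∫ u, g u) * f x)) := by
  rw [← integral_mul_const]
  refine tendsto_integral_filter_of_dominated_convergence (fun u => |g u| * M) ?_ ?_
    (hg.abs.mul_const M) ?_
  · exact Eventually.of_forall fun i => hg.aestronglyMeasurable.mul
      (by fun_prop : Measurable fun u => f (x - t i * u)).aestronglyMeasurable
  · exact Eventually.of_forall fun i => ae_of_all _ fun u => by
      rw [Real.norm_eq_abs, abs_mul]
      exact mul_le_mul_of_nonneg_left (hfM _) (abs_nonneg _)
  · refine ae_of_all _ fun u => (hfx.tendsto.comp ?_).const_mul (g u)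
    simpa using tendsto_const_nhds.sub (ht.mul_const u)

lemma kde_eq_smul_sum {Ω : Type*} (K : ℝ → ℝ) (X : ℕ → Ω → ℝ) (n : ℕ) (h x : ℝ) :
    kde K X n h x = (1 / (n * h)) • ∑ i ∈ Finset.range n, fun ω => K ((x - X i ω) / h) := by
  funext ω
  simp [kde, Finset.sum_apply]

section Estimator

variable {Ω : Type*} [MeasurableSpace Ω] {P : Measure Ω} {X : ℕ → Ω → ℝ} {K : ℝ → ℝ}

lemma measurable_kde (hX : ∀ i, Measurable (X i)) (hK : Measurable K) (n : ℕ) (h x : ℝ) :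
    Measurable (kde K X n h x) := by
  unfold kde
  fun_prop

lemma variance_kde_eq [IsProbabilityMeasure P] (hX : ∀ i, Measurable (X i)) (hindep : iIndepFun X P)
    {f : ℝ → ℝ} (hf : Measurable f) (hf_nonneg : ∀ y, 0 ≤ f y)
    (hlaw : ∀ i, P.map (X i) = volume.withDensity fun y => ENNReal.ofReal (f y))
    (hK : Measurable K) {M : ℝ} (hKM : ∀ u, |K u| ≤ M) (n : ℕ) (x : ℝ) {h : ℝ} (hh : 0 < h) :
    variance (kde K X n h x) P
      = 1 / (n * h) * (kernelAverage (fun u => K u ^ 2) f x h - h * kernelAverage K f x h ^ 2) := by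
  have hpair : Set.Pairwise (Finset.range n : Set ℕ)
      fun i j => IndepFun (fun ω => K ((x - X i ω) / h)) (fun ω => K ((x - X j ω) / h)) P :=
    fun i _ j _ hij => (hindep.comp (fun _ y => K ((x - y) / h)) fun _ => by fun_prop).indepFun hij
  rw [kde_eq_smul_sum, variance_smul,
    IndepFun.variance_sum (fun i _ => memLp_kernel_comp (hX i) hK hKM 2 x h) hpair]
  simp_rw [variance_kernel_comp (hX _) hf hf_nonneg (hlaw _) hK hKM x hh]
  rw [Finset.sum_const, Finset.card_range, nsmul_eq_mul]
  rcases eq_or_ne n 0 with rfl | hn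
  · simp
  · field_simp

end Estimator

theorem variance_kde_general {Ω : Type*} [MeasurableSpace Ω] (P : Measure Ω) [IsProbabilityMeasure P]
    -- the i.i.d. sample with common density f
    (X : ℕ → Ω → ℝ) (hXmeas : ∀ i, Measurable (X i))
    (hXindep : iIndepFun X P)
    (f : ℝ → ℝ) (hfmeas : Measurable f) (hfnonneg : ∀ y, 0 ≤ f y)
    (hXlaw : ∀ i, Measure.map (X i) P = volume.withDensity fun y => ENNReal.ofReal (f y))
    -- the kernel: measurable, of bounded variation, right-continuous, bounded,
    -- with ∫ K = 1, ∫ u K(u) du = 0, ∫ u² |K(u)| du < ∞ and ∫ K(u)² du < ∞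
    (K : ℝ → ℝ) (hKmeas : Measurable K)
    (hKbdd : ∃ M, ∀ u, |K u| ≤ M)
    (hKint : Integrable K volume)
    (hKsqint : Integrable (fun u => (K u) ^ 2) volume)
    -- the point x, f bounded and continuous at x
    (x : ℝ) (hfbdd : ∃ M, ∀ y, |f y| ≤ M) (hfcont : ContinuousAt f x)
    -- bandwidth sequence with h_n → 0 and n h_n → ∞
    (h : ℕ → ℝ) (hpos : ∀ n, 0 < h n)
    (hto0 : Tendsto h atTop (𝓝 0)) :
    (fun n : ℕ =>
        (∫ ω, (kde K X n (h n) x ω - ∫ ω', kde K X n (h n) x ω' ∂P) ^ 2 ∂P)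
          - 1 / ((n : ℝ) * h n) * f x * (∫ u, (K u) ^ 2))
      =o[atTop] (fun n : ℕ => 1 / ((n : ℝ) * h n)) := by
  obtain ⟨MK, hMK⟩ := hKbdd
  obtain ⟨Mf, hMf⟩ := hfbdd
  have hsq := tendsto_kernelAverage hto0 hKsqint hfmeas hMf hfcont
  have hlin := tendsto_kernelAverage hto0 hKint hfmeas hMf hfcont
  have hrem : Tendsto (fun n => kernelAverage (fun u => K u ^ 2) f x (h n)
      - h n * kernelAverage K f x (h n) ^ 2 - f x * ∫ u, K u ^ 2) atTop (𝓝 0) := by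
    convert (hsq.sub (hto0.mul (hlin.pow 2))).sub_const (f x * ∫ u, K u ^ 2) using 2
    ring
  refine ((isBigO_refl (fun n : ℕ => 1 / ((n : ℝ) * h n)) atTop).mul_isLittleO
    ((isLittleO_one_iff ℝ).2 hrem)).congr (fun n => ?_) (fun n => mul_one _)
  rw [← variance_eq_integral (measurable_kde hXmeas hKmeas n (h n) x).aemeasurable,
    variance_kde_eq hXmeas hXindep hfmeas hfnonneg hXlaw hKmeas hMK n x (hpos n)]
  ring

/-- if `h_n → 0` and `n h_n → ∞` then
`Var(f̂_{n,h_n}(x)) = (1/(n h_n)) f(x) ∫ K(u)² du + o(1/(n h_n))` as `n → ∞`. -/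
theorem variance_kde {Ω : Type*} [MeasurableSpace Ω] (P : Measure Ω) [IsProbabilityMeasure P]
    -- the i.i.d. sample with common density f
    (X : ℕ → Ω → ℝ) (hXmeas : ∀ i, Measurable (X i))
    (hXindep : iIndepFun X P)
    (f : ℝ → ℝ) (hfmeas : Measurable f) (hfnonneg : ∀ y, 0 ≤ f y)
    (hXlaw : ∀ i, Measure.map (X i) P = volume.withDensity fun y => ENNReal.ofReal (f y))
    -- the kernel: measurable, of bounded variation, right-continuous, bounded,
    -- with ∫ K = 1, ∫ u K(u) du = 0, ∫ u² |K(u)| du < ∞ and ∫ K(u)² du < ∞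
    (K : ℝ → ℝ) (hKmeas : Measurable K)
    (hKbv : BoundedVariationOn K Set.univ)
    (hKrc : ∀ u, ContinuousWithinAt K (Set.Ici u) u)
    (hKbdd : ∃ M, ∀ u, |K u| ≤ M)
    (hKint : Integrable K volume) (hKone : (∫ u, K u) = 1)
    (hKuint : Integrable (fun u => u * K u) volume) (hKuzero : (∫ u, u * K u) = 0)
    (hKu2int : Integrable (fun u => u ^ 2 * |K u|) volume)
    (hKsqint : Integrable (fun u => (K u) ^ 2) volume)
    -- the point x, f bounded and continuous at x
    (x : ℝ) (hfbdd : ∃ M, ∀ y, |f y| ≤ M) (hfcont : ContinuousAt f x)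
    -- bandwidth sequence with h_n → 0 and n h_n → ∞
    (h : ℕ → ℝ) (hpos : ∀ n, 0 < h n)
    (hto0 : Tendsto h atTop (𝓝 0))
    (hnh : Tendsto (fun n : ℕ => (n : ℝ) * h n) atTop atTop) :
    (fun n : ℕ =>
        (∫ ω, (kde K X n (h n) x ω - ∫ ω', kde K X n (h n) x ω' ∂P) ^ 2 ∂P)
          - 1 / ((n : ℝ) * h n) * f x * (∫ u, (K u) ^ 2))
      =o[atTop] (fun n : ℕ => 1 / ((n : ℝ) * h n)) :=
  variance_kde_general P X hXmeas hXindep f hfmeas hfnonneg hXlaw K hKmeas hKbdd hKint hKsqint x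
    hfbdd hfcont h hpos hto0
end

section
/- Fix x ∈ ℝ. Assume ∫ |u|³ |K(u)| du < ∞ and ∫ |u|³ |K''(u)| du < ∞; that u^j K(u) → 0 and u^j K'(u) → 0 as |u| → ∞ for j = 0, 1, 2, 3; and that f is bounded on ℝ and four times continuously differentiable in a neighborhood of x. Then for every fixed n ≥ 1, as h → 0⁺, the bias of the bias-reduced kernel estimator satisfies E[f̂ᵇ_{n,h}(x)] − f(x) = −(h³/6) f'''(x) ∫ u³ K(u) du + o(h³). -/
open MeasureTheory ProbabilityTheory Filter Asymptotics Topology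

/-!
Substituting `y = x - h u` turns `E f̂ᵇ_{n,h}(x)` into `∫ f(x - h u) K̃(u) du`. Integrating by
parts twice gives `∫ K'' = ∫ u K'' = 0`, `∫ u² K'' = 2 ∫ K` and `∫ u³ K'' = 6 ∫ u K = 0`, so `K̃`
has moments `1, 0, 0, ∫ u³ K`, and against `K̃` the cubic Taylor polynomial of `f` at `x`
integrates to `f(x) - (h³/6) f'''(x) ∫ u³ K`. The Taylor remainder `R` is `o(t³)` at `0` and,
`f` being bounded, `O(t³)` on all of `ℝ`; dominated convergence with the integrable majorant
`|u|³ |K̃(u)|` then gives `∫ R(-h u) K̃(u) du = o(h³)`.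
-/

/-- The modified kernel `K̃(u) = K(u) − (1/2)(∫ v² K(v) dv) K''(u)`. -/
noncomputable def ktilde (K : ℝ → ℝ) (u : ℝ) : ℝ :=
  K u - 1 / 2 * (∫ v, v ^ 2 * K v) * deriv (deriv K) u

/-- The bias-reduced kernel density estimator
`f̂ᵇ_{n,h}(x) = (1/(nh)) Σ_{i<n} K̃((x - X_i)/h)`. -/
noncomputable def kdeb {Ω : Type*} (K : ℝ → ℝ) (X : ℕ → Ω → ℝ)
    (n : ℕ) (h x : ℝ) (ω : Ω) : ℝ :=
  (1 / (n * h)) * ∑ i ∈ Finset.range n, ktilde K ((x - X i ω) / h)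

lemma integrable_pow_mul_of_integrable_abs_pow_mul {g : ℝ → ℝ} (hg : Continuous g) {j k : ℕ}
    (hjk : j ≤ k) (hk : Integrable (fun u => |u| ^ k * |g u|)) :
    Integrable (fun u => u ^ j * g u) := by
  have hcont : Continuous (fun u => u ^ j * g u) := by fun_prop
  have hnear : IntegrableOn (fun u => u ^ j * g u) (Set.Icc (-1) 1) :=
    hcont.integrableOn_Icc
  have hfar : IntegrableOn (fun u => u ^ j * g u) (Set.Icc (-1) 1)ᶜ := by
    refine hk.integrableOn.mono' hcont.aestronglyMeasurable.restrict ?_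
    refine (ae_restrict_iff' measurableSet_Icc.compl).2 (ae_of_all _ fun u hu => ?_)
    have h1u : 1 ≤ |u| := by
      by_contra! hlt
      exact hu (Set.mem_Icc.2 (abs_le.1 hlt.le))
    rw [norm_mul, norm_pow, Real.norm_eq_abs, Real.norm_eq_abs]
    gcongr
  simpa using hnear.union hfar

lemma integral_deriv_eq_zero_of_tendsto_cocompact {g g' : ℝ → ℝ}
    (hd : ∀ t, HasDerivAt g (g' t) t) (hg' : Integrable g')
    (hg : Tendsto g (cocompact ℝ) (𝓝 0)) : ∫ t, g' t = 0 := by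
  rw [cocompact_eq_atBot_atTop, tendsto_sup] at hg
  simpa using integral_of_hasDerivAt_of_tendsto hd hg' hg.1 hg.2

section SecondDerivativeMoments

variable {K K' K'' : ℝ → ℝ} (hK : ∀ u, HasDerivAt K (K' u) u)
  (hK' : ∀ u, HasDerivAt K' (K'' u) u)
include hK hK'

lemma integral_mul_second_deriv_eq_zero (hint : Integrable (fun u => u * K'' u))
    (hK'lim : Tendsto (fun u => u * K' u) (cocompact ℝ) (𝓝 0))
    (hKlim : Tendsto K (cocompact ℝ) (𝓝 0)) :
    ∫ u, u * K'' u = 0 := by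
  refine integral_deriv_eq_zero_of_tendsto_cocompact (g := fun u => u * K' u - K u)
    (fun u => ?_) hint (by simpa using hK'lim.sub hKlim)
  exact (((hasDerivAt_id u).mul (hK' u)).sub (hK u)).congr_deriv (by simp only [id_eq]; ring)

lemma integral_pow_add_two_mul_second_deriv (j : ℕ)
    (hint : Integrable (fun u => u ^ (j + 2) * K'' u)) (hKint : Integrable (fun u => u ^ j * K u))
    (hK'lim : Tendsto (fun u => u ^ (j + 2) * K' u) (cocompact ℝ) (𝓝 0))
    (hKlim : Tendsto (fun u => u ^ (j + 1) * K u) (cocompact ℝ) (𝓝 0)) :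
    ∫ u, u ^ (j + 2) * K'' u = (j + 2) * (j + 1) * ∫ u, u ^ j * K u := by
  have hint' : Integrable (fun u => u ^ (j + 2) * K'' u - (j + 2) * (j + 1) * (u ^ j * K u)) :=
    hint.sub (hKint.const_mul _)
  have key := integral_deriv_eq_zero_of_tendsto_cocompact
    (g := fun u => u ^ (j + 2) * K' u - (j + 2) * (u ^ (j + 1) * K u)) (fun u => ?_) hint'
    (by simpa using hK'lim.sub (hKlim.const_mul ((j : ℝ) + 2)))
  · rw [integral_sub hint (hKint.const_mul _), integral_const_mul, sub_eq_zero] at key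
    exact key
  exact (((hasDerivAt_pow (j + 2) u).mul (hK' u)).sub
    (((hasDerivAt_pow (j + 1) u).mul (hK u)).const_mul ((j : ℝ) + 2))).congr_deriv
    (by simp only [Nat.add_sub_cancel]; push_cast; ring)

end SecondDerivativeMoments

lemma integral_pow_mul_ktilde {K : ℝ → ℝ} (j : ℕ) (hK : Integrable (fun u => u ^ j * K u))
    (hK'' : Integrable (fun u => u ^ j * deriv (deriv K) u)) :
    ∫ u, u ^ j * ktilde K u = (∫ u, u ^ j * K u)
      - 1 / 2 * (∫ v, v ^ 2 * K v) * ∫ u, u ^ j * deriv (deriv K) u := by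
  have hsplit : (fun u => u ^ j * ktilde K u) = fun u => u ^ j * K u
      - 1 / 2 * (∫ v, v ^ 2 * K v) * (u ^ j * deriv (deriv K) u) := by
    ext u; simp only [ktilde]; ring
  rw [hsplit, integral_sub hK (hK''.const_mul _), integral_const_mul]

lemma ktilde_moments {K : ℝ → ℝ} (hKC2 : ContDiff ℝ 2 K) (hKone : (∫ u, K u) = 1)
    (hKuzero : (∫ u, u * K u) = 0)
    (hKu3int : Integrable (fun u => |u| ^ 3 * |K u|))
    (hK''u3int : Integrable (fun u => |u| ^ 3 * |deriv (deriv K) u|))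
    (hKdecay : ∀ j : ℕ, j ≤ 3 → Tendsto (fun u => u ^ j * K u) (cocompact ℝ) (𝓝 0))
    (hK'decay : ∀ j : ℕ, j ≤ 3 → Tendsto (fun u => u ^ j * deriv K u) (cocompact ℝ) (𝓝 0)) :
    (∀ j ≤ 3, Integrable (fun u => u ^ j * ktilde K u)) ∧ ∫ u, ktilde K u = 1 ∧
      ∫ u, u * ktilde K u = 0 ∧ ∫ u, u ^ 2 * ktilde K u = 0 ∧
      ∫ u, u ^ 3 * ktilde K u = ∫ u, u ^ 3 * K u := by
  have hKC1 : ContDiff ℝ 1 (deriv K) := hKC2.deriv' (n := 1)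
  have hK : ∀ u, HasDerivAt K (deriv K u) u :=
    fun u => (hKC2.differentiable (by norm_num) u).hasDerivAt
  have hK' : ∀ u, HasDerivAt (deriv K) (deriv (deriv K) u) u :=
    fun u => (hKC1.differentiable (by norm_num) u).hasDerivAt
  have hKpow : ∀ j ≤ 3, Integrable (fun u => u ^ j * K u) := fun j hj =>
    integrable_pow_mul_of_integrable_abs_pow_mul hKC2.continuous hj hKu3int
  have hK''pow : ∀ j ≤ 3, Integrable (fun u => u ^ j * deriv (deriv K) u) := fun j hj =>
    integrable_pow_mul_of_integrable_abs_pow_mul (hKC1.continuous_deriv le_rfl) hj hK''u3int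
  have hdecay0 : Tendsto K (cocompact ℝ) (𝓝 0) := by simpa using hKdecay 0 (by norm_num)
  have hdecay0' : Tendsto (deriv K) (cocompact ℝ) (𝓝 0) := by
    simpa using hK'decay 0 (by norm_num)
  have hm0 : ∫ u, deriv (deriv K) u = 0 :=
    integral_deriv_eq_zero_of_tendsto_cocompact hK' (by simpa using hK''pow 0 (by norm_num))
      hdecay0'
  have hm1 : ∫ u, u * deriv (deriv K) u = 0 :=
    integral_mul_second_deriv_eq_zero hK hK' (by simpa using hK''pow 1 (by norm_num))
      (by simpa using hK'decay 1 (by norm_num)) hdecay0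
  have hm2 : ∫ u, u ^ 2 * deriv (deriv K) u = 2 * ∫ u, K u := by
    simpa using integral_pow_add_two_mul_second_deriv hK hK' 0 (hK''pow 2 (by norm_num))
      (by simpa using hKpow 0 (by norm_num)) (hK'decay 2 (by norm_num))
      (by simpa using hKdecay 1 (by norm_num))
  have hm3 : ∫ u, u ^ 3 * deriv (deriv K) u = 6 * ∫ u, u * K u := by
    have := integral_pow_add_two_mul_second_deriv hK hK' 1 (hK''pow 3 le_rfl)
      (by simpa using hKpow 1 (by norm_num)) (hK'decay 3 le_rfl) (hKdecay 2 (by norm_num))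
    norm_num at this
    exact this
  have hKt := fun j (hj : j ≤ 3) => integral_pow_mul_ktilde j (hKpow j hj) (hK''pow j hj)
  refine ⟨fun j hj => ((hKpow j hj).sub
    ((hK''pow j hj).const_mul (1 / 2 * ∫ v, v ^ 2 * K v))).congr
    (ae_of_all _ fun u => by simp only [ktilde, Pi.sub_apply]; ring), ?_, ?_, ?_, ?_⟩
  · simpa [hm0, hKone] using hKt 0 (by norm_num)
  · simpa [hm1, hKuzero] using hKt 1 (by norm_num)
  · rw [hKt 2 (by norm_num), hm2, hKone]; ring
  · rw [hKt 3 le_rfl, hm3, hKuzero]; ring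

lemma continuous_ktilde {K : ℝ → ℝ} (hK : ContDiff ℝ 2 K) : Continuous (ktilde K) :=
  hK.continuous.sub (continuous_const.mul ((hK.deriv' (n := 1)).continuous_deriv le_rfl))

lemma exists_abs_ktilde_le {K : ℝ → ℝ} (hK : ∃ M, ∀ u, |K u| ≤ M)
    (hK'' : ∃ M, ∀ u, |deriv (deriv K) u| ≤ M) : ∃ M, ∀ u, |ktilde K u| ≤ M := by
  obtain ⟨M, hM⟩ := hK
  obtain ⟨M'', hM''⟩ := hK''
  refine ⟨M + |1 / 2 * ∫ v, v ^ 2 * K v| * M'', fun u => (abs_sub _ _).trans ?_⟩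
  rw [abs_mul]
  gcongr
  exacts [hM u, hM'' u]

noncomputable def cubicTaylor (f : ℝ → ℝ) (x t : ℝ) : ℝ :=
  f x + t * deriv f x + t ^ 2 / 2 * deriv (deriv f) x + t ^ 3 / 6 * deriv (deriv (deriv f)) x

lemma taylorWithinEval_three_of_isOpen {f : ℝ → ℝ} {s : Set ℝ} (hs : IsOpen s) {x : ℝ}
    (hx : x ∈ s) (t : ℝ) : taylorWithinEval f 3 s x (x + t) = cubicTaylor f x t := by
  simp only [taylor_within_apply, Finset.sum_range_succ, Finset.sum_range_zero,
    iteratedDerivWithin_of_isOpen hs hx, iteratedDeriv_succ, iteratedDeriv_zero, cubicTaylor]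
  simp [Nat.factorial]
  ring

lemma isLittleO_sub_cubicTaylor {f : ℝ → ℝ} {x : ℝ} {s : Set ℝ} (hs : s ∈ 𝓝 x)
    (hf : ContDiffOn ℝ 3 f s) :
    (fun t => f (x + t) - cubicTaylor f x t) =o[𝓝 0] (fun t => t ^ 3) := by
  obtain ⟨ε, hε, hball⟩ := Metric.mem_nhds_iff.1 hs
  have hx : x ∈ Metric.ball x ε := Metric.mem_ball_self hε
  have htaylor := taylor_isLittleO (convex_ball x ε) hx (hf.mono hball)
  rw [nhdsWithin_eq_nhds.2 (Metric.ball_mem_nhds x hε)] at htaylor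
  have hshift : Tendsto (fun t => x + t) (𝓝 0) (𝓝 x) := by
    simpa using (continuous_const_add x).tendsto 0
  simpa only [Function.comp_def, add_sub_cancel_left,
    taylorWithinEval_three_of_isOpen Metric.isOpen_ball hx] using htaylor.comp_tendsto hshift

lemma pow_isBigO_pow_of_le {ε : ℝ} (hε : 0 < ε) {j k : ℕ} (hjk : j ≤ k) :
    (fun t : ℝ => t ^ j) =O[𝓟 {t | ε ≤ |t|}] (fun t => t ^ k) := by
  refine IsBigO.of_bound (ε ^ (k - j))⁻¹ (eventually_principal.2 fun t ht => ?_)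
  have ht : ε ≤ |t| := ht
  rw [Real.norm_eq_abs, Real.norm_eq_abs, abs_pow, abs_pow, ← Nat.add_sub_of_le hjk, pow_add,
    Nat.add_sub_cancel_left, inv_mul_eq_div, le_div_iff₀ (by positivity)]
  gcongr

lemma isBigO_top_of_isBigO_nhds_zero {F : Type*} [NormedAddCommGroup F] {R : ℝ → ℝ} {g : ℝ → F}
    (h0 : R =O[𝓝 0] g) (hfar : ∀ ε > 0, R =O[𝓟 {t | ε ≤ |t|}] g) : R =O[⊤] g := by
  obtain ⟨C, hC⟩ := h0.bound
  obtain ⟨ε, hε, hball⟩ := Metric.eventually_nhds_iff_ball.1 hC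
  have hnear : R =O[𝓟 (Metric.ball 0 ε)] g := IsBigO.of_bound C (eventually_principal.2 hball)
  have hcover : Metric.ball (0 : ℝ) ε ∪ {t | ε ≤ |t|} = Set.univ := by
    ext t
    simp [lt_or_ge]
  simpa [sup_principal, hcover] using hnear.sup (hfar ε hε)

lemma sub_cubicTaylor_isBigO_top {f : ℝ → ℝ} {x : ℝ} (hfbdd : ∃ M, ∀ y, |f y| ≤ M)
    (h0 : (fun t => f (x + t) - cubicTaylor f x t) =O[𝓝 0] (fun t => t ^ 3)) :
    (fun t => f (x + t) - cubicTaylor f x t) =O[⊤] (fun t => t ^ 3) := by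
  refine isBigO_top_of_isBigO_nhds_zero h0 fun ε hε => ?_
  obtain ⟨M, hM⟩ := hfbdd
  have hpow := fun j (hj : j ≤ 3) => pow_isBigO_pow_of_le hε hj
  have hf : (fun t => f (x + t)) =O[𝓟 {t | ε ≤ |t|}] (fun t => t ^ 3) :=
    (IsBigO.of_bound (g := fun _ => (1 : ℝ)) M
      (Eventually.of_forall fun t => by simpa using hM (x + t))).trans
      (by simpa using hpow 0 (by norm_num))
  have htaylor := ((((hpow 0 (by norm_num)).const_mul_left (f x)).add
    ((hpow 1 (by norm_num)).const_mul_left (deriv f x))).add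
    ((hpow 2 (by norm_num)).const_mul_left (deriv (deriv f) x / 2))).add
    ((hpow 3 le_rfl).const_mul_left (deriv (deriv (deriv f)) x / 6))
  refine (hf.sub htaylor).congr_left fun t => ?_
  simp only [cubicTaylor]
  ring

lemma cubicTaylor_mul_eq_sum (f L : ℝ → ℝ) (x h u : ℝ) :
    cubicTaylor f x (h * u) * L u = ∑ j : Fin 4,
      ![f x, h * deriv f x, h ^ 2 / 2 * deriv (deriv f) x,
        h ^ 3 / 6 * deriv (deriv (deriv f)) x] j * (u ^ (j : ℕ) * L u) := by
  simp [Fin.sum_univ_four, cubicTaylor]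
  ring

section CubicMoments

variable {L : ℝ → ℝ} (hL : ∀ j ≤ 3, Integrable (fun u => u ^ j * L u))
include hL

lemma integrable_cubicTaylor_mul (f : ℝ → ℝ) (x h : ℝ) :
    Integrable (fun u => cubicTaylor f x (h * u) * L u) := by
  simp_rw [cubicTaylor_mul_eq_sum]
  exact integrable_finsetSum _ fun j _ => (hL j (by omega)).const_mul _

lemma integral_cubicTaylor_mul (h0 : ∫ u, L u = 1) (h1 : ∫ u, u * L u = 0)
    (h2 : ∫ u, u ^ 2 * L u = 0) (f : ℝ → ℝ) (x h : ℝ) :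
    ∫ u, cubicTaylor f x (h * u) * L u
      = f x + h ^ 3 / 6 * deriv (deriv (deriv f)) x * ∫ u, u ^ 3 * L u := by
  simp_rw [cubicTaylor_mul_eq_sum]
  rw [integral_finsetSum Finset.univ fun (j : Fin 4) _ => (hL j (by omega)).const_mul _]
  simp [Fin.sum_univ_four, integral_const_mul, h0, h1, h2]

end CubicMoments

lemma isLittleO_integral_comp_mul {R g : ℝ → ℝ} {k : ℕ} (hR : Measurable R)
    (hg : AEStronglyMeasurable g) (hRtop : R =O[⊤] (fun t => t ^ k))
    (hR0 : R =o[𝓝 0] (fun t => t ^ k)) (hgk : Integrable (fun u => u ^ k * g u)) :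
    (fun h => ∫ u, R (h * u) * g u) =o[𝓝[≠] 0] (fun h => h ^ k) := by
  obtain ⟨C, hC⟩ := isBigO_top.1 hRtop
  have hne : ∀ᶠ h in 𝓝[≠] (0 : ℝ), h ^ k = 0 → ∫ u, R (h * u) * g u = 0 :=
    eventually_nhdsWithin_of_forall fun h hh hzero => (pow_ne_zero k hh hzero).elim
  rw [isLittleO_iff_tendsto' hne]
  simp_rw [← integral_div]
  have hlim : ∀ u, Tendsto (fun h => R (h * u) * g u / h ^ k) (𝓝[≠] 0) (𝓝 0) := by
    intro u
    have hscale : Tendsto (fun h : ℝ => h * u) (𝓝 0) (𝓝 0) := by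
      simpa using (continuous_mul_const u).tendsto 0
    have hRu : (fun h => R (h * u)) =o[𝓝 0] (fun h => h ^ k) :=
      (hR0.comp_tendsto hscale).trans_isBigO
        (((isBigO_refl (fun h : ℝ => h ^ k) _).const_mul_left (u ^ k)).congr_left
          fun h => by simp only [Function.comp_apply, mul_pow, mul_comm])
    simpa [div_mul_eq_mul_div] using
      ((hRu.tendsto_div_nhds_zero).mono_left nhdsWithin_le_nhds).mul_const (g u)
  refine tendsto_integral_filter_of_dominated_convergence
    (F := fun h u => R (h * u) * g u / h ^ k) (fun u => C * ‖u ^ k * g u‖)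
    (Eventually.of_forall fun h => by
      simp_rw [div_eq_mul_inv]
      exact ((hR.comp (measurable_const_mul h)).aestronglyMeasurable.mul hg).mul_const (h ^ k)⁻¹)
    (eventually_nhdsWithin_of_forall fun h hh => ae_of_all _ fun u => ?_)
    (hgk.norm.const_mul C) (ae_of_all _ hlim) |>.trans_eq ?_
  · have hhk : 0 < ‖h ^ k‖ := norm_pos_iff.2 (pow_ne_zero k hh)
    rw [norm_div, div_le_iff₀ hhk, norm_mul]
    calc ‖R (h * u)‖ * ‖g u‖ ≤ C * ‖(h * u) ^ k‖ * ‖g u‖ := by gcongr; exact hC _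
      _ = C * ‖u ^ k * g u‖ * ‖h ^ k‖ := by simp only [mul_pow, norm_mul]; ring
  · simp

lemma isLittleO_integral_sub_cubicTaylor_mul {f L : ℝ → ℝ} {x : ℝ} {s : Set ℝ}
    (hfmeas : Measurable f) (hfbdd : ∃ M, ∀ y, |f y| ≤ M) (hs : s ∈ 𝓝 x)
    (hf : ContDiffOn ℝ 3 f s) (hL : AEStronglyMeasurable L)
    (hL3 : Integrable (fun u => u ^ 3 * L u)) :
    (fun h => ∫ u, (f (x - h * u) - cubicTaylor f x (-(h * u))) * L u)
      =o[𝓝[>] 0] (fun h => h ^ 3) := by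
  have hR0 := isLittleO_sub_cubicTaylor hs hf
  have hneg : Tendsto (fun h : ℝ => -h) (𝓝[>] 0) (𝓝[≠] 0) :=
    tendsto_nhdsWithin_iff.2 ⟨(continuous_neg.tendsto' 0 0 neg_zero).mono_left
      nhdsWithin_le_nhds, eventually_nhdsWithin_of_forall fun h hh => neg_ne_zero.2 hh.ne'⟩
  refine (((isLittleO_integral_comp_mul (by unfold cubicTaylor; fun_prop) hL
    (sub_cubicTaylor_isBigO_top hfbdd hR0.isBigO) hR0 hL3).comp_tendsto hneg).trans_isBigO
    ?_).congr_left fun h => ?_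
  · exact IsBigO.of_bound 1 (Eventually.of_forall fun h => by simp)
  · simp only [Function.comp_apply, neg_mul, sub_eq_add_neg]

lemma integral_comp_div_eq_of_density {Ω : Type*} [MeasurableSpace Ω] {P : Measure Ω}
    {Y : Ω → ℝ} (hY : Measurable Y) {f : ℝ → ℝ} (hfmeas : Measurable f) (hfnonneg : ∀ y, 0 ≤ f y)
    (hlaw : P.map Y = volume.withDensity fun y => ENNReal.ofReal (f y)) {L : ℝ → ℝ}
    (hL : Measurable L) (x : ℝ) {h : ℝ} (hh : 0 < h) :
    ∫ ω, L ((x - Y ω) / h) ∂P = h * ∫ u, f (x - h * u) * L u := by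
  have hscale : ∫ u, f (x - h * u) * L u = h⁻¹ * ∫ t, f (x - t) * L (t / h) := by
    rw [← abs_of_pos (inv_pos.2 hh), ← smul_eq_mul, ← Measure.integral_comp_mul_left]
    simp only [mul_div_cancel_left₀ _ hh.ne']
  have hshift : ∫ t, f (x - t) * L (t / h) = ∫ y, f y * L ((x - y) / h) := by
    rw [← integral_sub_left_eq_self _ volume x]
    simp only [sub_sub_cancel]
  rw [hscale, hshift, mul_inv_cancel_left₀ hh.ne', ← integral_map hY.aemeasurable
    (by fun_prop : Measurable fun y => L ((x - y) / h)).aestronglyMeasurable, hlaw,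
    integral_withDensity_eq_integral_toReal_smul hfmeas.ennreal_ofReal
      (ae_of_all _ fun _ => ENNReal.ofReal_lt_top)]
  simp only [ENNReal.toReal_ofReal (hfnonneg _), smul_eq_mul]

lemma integral_kdeb {Ω : Type*} [MeasurableSpace Ω] {P : Measure Ω} [IsFiniteMeasure P]
    {X : ℕ → Ω → ℝ} (hX : ∀ i, Measurable (X i)) {f : ℝ → ℝ} (hfmeas : Measurable f)
    (hfnonneg : ∀ y, 0 ≤ f y)
    (hlaw : ∀ i, P.map (X i) = volume.withDensity fun y => ENNReal.ofReal (f y))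
    {K : ℝ → ℝ} (hKt : Measurable (ktilde K)) (hKtbdd : ∃ M, ∀ u, |ktilde K u| ≤ M)
    {n : ℕ} (hn : n ≠ 0) (x : ℝ) {h : ℝ} (hh : 0 < h) :
    ∫ ω, kdeb K X n h x ω ∂P = ∫ u, f (x - h * u) * ktilde K u := by
  obtain ⟨M, hM⟩ := hKtbdd
  have hint : ∀ i, Integrable (fun ω => ktilde K ((x - X i ω) / h)) P := fun i =>
    .of_bound (hKt.comp ((measurable_const.sub (hX i)).div_const h)).aestronglyMeasurable M
      (ae_of_all _ fun ω => hM _)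
  simp only [kdeb]
  rw [integral_const_mul, integral_finsetSum _ fun i _ => hint i]
  simp only [integral_comp_div_eq_of_density (hX _) hfmeas hfnonneg (hlaw _) hKt x hh,
    Finset.sum_const, Finset.card_range, nsmul_eq_mul]
  field_simp

theorem bias_kdeb_general {Ω : Type*} [MeasurableSpace Ω] (P : Measure Ω) [IsProbabilityMeasure P]
    -- the i.i.d. sample with common density f
    (X : ℕ → Ω → ℝ) (hXmeas : ∀ i, Measurable (X i))
    (f : ℝ → ℝ) (hfmeas : Measurable f) (hfnonneg : ∀ y, 0 ≤ f y)
    (hXlaw : ∀ i, Measure.map (X i) P = volume.withDensity fun y => ENNReal.ofReal (f y))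
    -- the kernel: twice continuously differentiable, K and K'' bounded and of
    -- bounded variation, ∫ K = 1, ∫ u K(u) du = 0, ∫ u² |K(u)| du < ∞
    (K : ℝ → ℝ) (hKC2 : ContDiff ℝ 2 K)
    (hKbdd : ∃ M, ∀ u, |K u| ≤ M) (hK''bdd : ∃ M, ∀ u, |deriv (deriv K) u| ≤ M)
    (hKone : (∫ u, K u) = 1)
    (hKuzero : (∫ u, u * K u) = 0)
    -- extra moment conditions: ∫ |u|³ |K(u)| du < ∞ and ∫ |u|³ |K''(u)| du < ∞
    (hKu3int : Integrable (fun u => |u| ^ 3 * |K u|) volume)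
    (hK''u3int : Integrable (fun u => |u| ^ 3 * |deriv (deriv K) u|) volume)
    -- decay: uʲ K(u) → 0 and uʲ K'(u) → 0 as |u| → ∞ for j = 0,1,2,3
    (hKdecay : ∀ j : ℕ, j ≤ 3 → Tendsto (fun u => u ^ j * K u) (cocompact ℝ) (𝓝 0))
    (hK'decay : ∀ j : ℕ, j ≤ 3 →
      Tendsto (fun u => u ^ j * deriv K u) (cocompact ℝ) (𝓝 0))
    -- the point x, f bounded and four times continuously differentiable near x
    (x : ℝ) (hfbdd : ∃ M, ∀ y, |f y| ≤ M)
    (hfC4 : ∃ s ∈ 𝓝 x, ContDiffOn ℝ 4 f s)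
    -- fixed sample size n ≥ 1
    (n : ℕ) (hn : 1 ≤ n) :
    (fun h : ℝ =>
        (∫ ω, kdeb K X n h x ω ∂P) - f x
          + h ^ 3 / 6 * deriv (deriv (deriv f)) x * (∫ u, u ^ 3 * K u))
      =o[𝓝[>] (0 : ℝ)] (fun h : ℝ => h ^ 3) := by
  obtain ⟨hKtint, hKt0, hKt1, hKt2, hKt3⟩ :=
    ktilde_moments hKC2 hKone hKuzero hKu3int hK''u3int hKdecay hK'decay
  have hKtcont := continuous_ktilde hKC2
  obtain ⟨s, hs, hfs⟩ := hfC4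
  refine (isLittleO_integral_sub_cubicTaylor_mul hfmeas hfbdd hs (hfs.of_le (by norm_num))
    hKtcont.aestronglyMeasurable (hKtint 3 le_rfl)).congr' ?_ EventuallyEq.rfl
  filter_upwards [self_mem_nhdsWithin] with h hh
  obtain ⟨M, hM⟩ := hfbdd
  have hfint : Integrable (fun u => f (x - h * u) * ktilde K u) :=
    (by simpa using hKtint 0 (by norm_num) : Integrable (ktilde K)).bdd_mul (c := M)
      (hfmeas.comp (by fun_prop)).aestronglyMeasurable (ae_of_all _ fun u => hM _)
  have hT := integral_cubicTaylor_mul hKtint hKt0 hKt1 hKt2 f x (-h)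
  have hTint := integrable_cubicTaylor_mul hKtint f x (-h)
  simp only [neg_mul] at hT hTint
  simp_rw [sub_mul]
  rw [integral_sub hfint hTint, hT, hKt3, integral_kdeb hXmeas hfmeas hfnonneg hXlaw
    hKtcont.measurable (exists_abs_ktilde_le hKbdd hK''bdd) (by omega) x hh]
  ring

/-- for fixed `n ≥ 1`, as `h → 0⁺`,
`E[f̂ᵇ_{n,h}(x)] − f(x) = −(h³/6) f'''(x) ∫ u³ K(u) du + o(h³)`. -/
theorem bias_kdeb {Ω : Type*} [MeasurableSpace Ω] (P : Measure Ω) [IsProbabilityMeasure P]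
    -- the i.i.d. sample with common density f
    (X : ℕ → Ω → ℝ) (hXmeas : ∀ i, Measurable (X i))
    (hXindep : iIndepFun X P)
    (f : ℝ → ℝ) (hfmeas : Measurable f) (hfnonneg : ∀ y, 0 ≤ f y)
    (hXlaw : ∀ i, Measure.map (X i) P = volume.withDensity fun y => ENNReal.ofReal (f y))
    -- the kernel: twice continuously differentiable, K and K'' bounded and of
    -- bounded variation, ∫ K = 1, ∫ u K(u) du = 0, ∫ u² |K(u)| du < ∞
    (K : ℝ → ℝ) (hKC2 : ContDiff ℝ 2 K)
    (hKbdd : ∃ M, ∀ u, |K u| ≤ M) (hK''bdd : ∃ M, ∀ u, |deriv (deriv K) u| ≤ M)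
    (hKbv : BoundedVariationOn K Set.univ)
    (hK''bv : BoundedVariationOn (deriv (deriv K)) Set.univ)
    (hKint : Integrable K volume) (hKone : (∫ u, K u) = 1)
    (hKuint : Integrable (fun u => u * K u) volume) (hKuzero : (∫ u, u * K u) = 0)
    (hKu2int : Integrable (fun u => u ^ 2 * |K u|) volume)
    -- extra moment conditions: ∫ |u|³ |K(u)| du < ∞ and ∫ |u|³ |K''(u)| du < ∞
    (hKu3int : Integrable (fun u => |u| ^ 3 * |K u|) volume)
    (hK''u3int : Integrable (fun u => |u| ^ 3 * |deriv (deriv K) u|) volume)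
    -- decay: uʲ K(u) → 0 and uʲ K'(u) → 0 as |u| → ∞ for j = 0,1,2,3
    (hKdecay : ∀ j : ℕ, j ≤ 3 → Tendsto (fun u => u ^ j * K u) (cocompact ℝ) (𝓝 0))
    (hK'decay : ∀ j : ℕ, j ≤ 3 →
      Tendsto (fun u => u ^ j * deriv K u) (cocompact ℝ) (𝓝 0))
    -- the point x, f bounded and four times continuously differentiable near x
    (x : ℝ) (hfbdd : ∃ M, ∀ y, |f y| ≤ M)
    (hfC4 : ∃ s ∈ 𝓝 x, ContDiffOn ℝ 4 f s)
    -- fixed sample size n ≥ 1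
    (n : ℕ) (hn : 1 ≤ n) :
    (fun h : ℝ =>
        (∫ ω, kdeb K X n h x ω ∂P) - f x
          + h ^ 3 / 6 * deriv (deriv (deriv f)) x * (∫ u, u ^ 3 * K u))
      =o[𝓝[>] (0 : ℝ)] (fun h : ℝ => h ^ 3) :=
  bias_kdeb_general P X hXmeas f hfmeas hfnonneg hXlaw K hKC2 hKbdd hK''bdd hKone hKuzero hKu3int
    hK''u3int hKdecay hK'decay x hfbdd hfC4 n hn
end

section
/- Fix x ∈ ℝ. Assume f is bounded on ℝ and continuous at x, and ∫ K̃(u)² du < ∞. If (h_n) is a sequence of bandwidths with h_n → 0 and n h_n → ∞, then the variance of the bias-reduced kernel estimator satisfies Var(f̂ᵇ_{n,h_n}(x)) = (1/(n h_n)) f(x) ∫ K̃(u)² du + o(1/(n h_n)) as n → ∞. -/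
open MeasureTheory ProbabilityTheory Filter Asymptotics Topology

theorem measurable_ktilde {K : ℝ → ℝ} (hK : Measurable K) : Measurable (ktilde K) :=
  hK.sub (measurable_const.mul (measurable_deriv _))

theorem abs_ktilde_le {K : ℝ → ℝ} {u M M₂ : ℝ} (hM : |K u| ≤ M) (hM₂ : |deriv (deriv K) u| ≤ M₂) :
    |ktilde K u| ≤ M + |1 / 2 * ∫ v, v ^ 2 * K v| * M₂ := by
  refine (abs_sub _ _).trans (add_le_add hM ?_)
  rw [abs_mul]
  exact mul_le_mul_of_nonneg_left hM₂ (abs_nonneg _)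

section Density

variable {Ω : Type*} [MeasurableSpace Ω] {P : Measure Ω} {Y : Ω → ℝ} {f : ℝ → ℝ}

theorem lintegral_ofReal_eq_one_of_map_eq_withDensity [IsProbabilityMeasure P]
    (hY : AEMeasurable Y P)
    (hlaw : P.map Y = volume.withDensity fun y => ENNReal.ofReal (f y)) :
    ∫⁻ y, ENNReal.ofReal (f y) = 1 := by
  have := (Measure.isProbabilityMeasure_map hY).measure_univ
  rwa [hlaw, withDensity_apply _ MeasurableSet.univ, Measure.restrict_univ] at this

theorem integrable_of_map_eq_withDensity [IsProbabilityMeasure P] (hY : AEMeasurable Y P)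
    (hf : Measurable f) (hf0 : ∀ y, 0 ≤ f y)
    (hlaw : P.map Y = volume.withDensity fun y => ENNReal.ofReal (f y)) :
    Integrable f := by
  refine ⟨hf.aestronglyMeasurable, (hasFiniteIntegral_iff_ofReal (.of_forall hf0)).2 ?_⟩
  simp [lintegral_ofReal_eq_one_of_map_eq_withDensity hY hlaw]

theorem integral_comp_eq_integral_mul_of_map_eq_withDensity (hY : AEMeasurable Y P)
    (hf : Measurable f) (hf0 : ∀ y, 0 ≤ f y)
    (hlaw : P.map Y = volume.withDensity fun y => ENNReal.ofReal (f y))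
    {φ : ℝ → ℝ} (hφ : Measurable φ) :
    ∫ ω, φ (Y ω) ∂P = ∫ y, φ y * f y := by
  rw [← integral_map hY hφ.aestronglyMeasurable, hlaw,
    integral_withDensity_eq_integral_toReal_smul hf.ennreal_ofReal
      (.of_forall fun _ => ENNReal.ofReal_lt_top)]
  simp [ENNReal.toReal_ofReal (hf0 _), mul_comm]

theorem variance_comp_of_map_eq_withDensity [IsProbabilityMeasure P] (hY : Measurable Y)
    (hf : Measurable f) (hf0 : ∀ y, 0 ≤ f y)
    (hlaw : P.map Y = volume.withDensity fun y => ENNReal.ofReal (f y))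
    {g : ℝ → ℝ} (hg : Measurable g) (hgY : MemLp (fun ω => g (Y ω)) 2 P) :
    variance (fun ω => g (Y ω)) P = (∫ y, g y ^ 2 * f y) - (∫ y, g y * f y) ^ 2 := by
  rw [variance_eq_sub hgY]
  simp only [Pi.pow_apply]
  rw [integral_comp_eq_integral_mul_of_map_eq_withDensity hY.aemeasurable hf hf0 hlaw
      (hg.pow_const 2),
    integral_comp_eq_integral_mul_of_map_eq_withDensity hY.aemeasurable hf hf0 hlaw hg]

end Density

theorem integral_comp_sub_div_mul (φ f : ℝ → ℝ) (x : ℝ) {h : ℝ} (hh : 0 < h) :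
    ∫ y, φ ((x - y) / h) * f y = h * ∫ u, φ u * f (x - h * u) := by
  have hG : ∀ y, φ ((x - y) / h) * f y
      = (fun z => φ (z / h) * f (x - h * (z / h))) (x - y) := by
    intro y
    simp [mul_div_cancel₀ _ hh.ne']
  simp_rw [hG, integral_sub_left_eq_self (fun z => φ (z / h) * f (x - h * (z / h))),
    Measure.integral_comp_div (fun u => φ u * f (x - h * u)), abs_of_pos hh, smul_eq_mul]

theorem variance_kdeb_eq {Ω : Type*} [MeasurableSpace Ω] {P : Measure Ω} [IsProbabilityMeasure P]
    {X : ℕ → Ω → ℝ} (hXmeas : ∀ i, Measurable (X i)) (hXindep : iIndepFun X P)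
    {f : ℝ → ℝ} (hf : Measurable f) (hf0 : ∀ y, 0 ≤ f y)
    (hXlaw : ∀ i, P.map (X i) = volume.withDensity fun y => ENNReal.ofReal (f y))
    {K : ℝ → ℝ} (hKt : Measurable (ktilde K)) {C : ℝ} (hKtC : ∀ u, |ktilde K u| ≤ C)
    (n : ℕ) {h : ℝ} (hh : 0 < h) (x : ℝ) :
    variance (kdeb K X n h x) P = 1 / (n * h) * (∫ u, ktilde K u ^ 2 * f (x - h * u))
      - 1 / n * (∫ u, ktilde K u * f (x - h * u)) ^ 2 := by
  set g : ℝ → ℝ := fun y => ktilde K ((x - y) / h)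
  have hg : Measurable g := hKt.comp (by fun_prop)
  have hgX : ∀ i, MemLp (fun ω => g (X i ω)) 2 P := fun i =>
    .of_bound (hg.comp (hXmeas i)).aestronglyMeasurable C
      (.of_forall fun ω => (Real.norm_eq_abs _).trans_le (hKtC _))
  have hvar : ∀ i, variance (fun ω => g (X i ω)) P
      = h * (∫ u, ktilde K u ^ 2 * f (x - h * u)) - (h * ∫ u, ktilde K u * f (x - h * u)) ^ 2 := by
    intro i
    rw [variance_comp_of_map_eq_withDensity (hXmeas i) hf hf0 (hXlaw i) hg (hgX i),
      ← integral_comp_sub_div_mul (fun u => ktilde K u ^ 2) f x hh,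
      ← integral_comp_sub_div_mul (ktilde K) f x hh]
  have hkdeb : kdeb K X n h x
      = fun ω => 1 / (n * h) * (∑ i ∈ Finset.range n, fun ω => g (X i ω)) ω := by
    ext ω
    simp [kdeb, g, Finset.sum_apply]
  rw [hkdeb, variance_const_mul, IndepFun.variance_sum (fun i _ => hgX i)
      (fun i _ j _ hij => (hXindep.indepFun hij).comp hg hg)]
  simp only [hvar, Finset.sum_const, Finset.card_range, nsmul_eq_mul]
  field_simp

theorem sq_integral_mul_le_integral_sq_mul_mul_integral {α : Type*} [MeasurableSpace α]
    {μ : Measure α} {φ w : α → ℝ} (hw : 0 ≤ᵐ[μ] w) (hw_int : Integrable w μ)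
    (hφw : Integrable (fun a => φ a * w a) μ) (hφ2w : Integrable (fun a => φ a ^ 2 * w a) μ) :
    (∫ a, φ a * w a ∂μ) ^ 2 ≤ (∫ a, φ a ^ 2 * w a ∂μ) * ∫ a, w a ∂μ := by
  have hquad : ∀ t : ℝ, 0 ≤ (∫ a, φ a ^ 2 * w a ∂μ) * (t * t) + 2 * (∫ a, φ a * w a ∂μ) * t
      + ∫ a, w a ∂μ := by
    intro t
    have hexp : ∫ a, (t * φ a + 1) ^ 2 * w a ∂μ = (∫ a, φ a ^ 2 * w a ∂μ) * (t * t)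
        + 2 * (∫ a, φ a * w a ∂μ) * t + ∫ a, w a ∂μ := by
      have : (fun a => (t * φ a + 1) ^ 2 * w a)
          = fun a => (t * t) * (φ a ^ 2 * w a) + (2 * t) * (φ a * w a) + w a := by
        ext a; ring
      have h12 : Integrable (fun a => (t * t) * (φ a ^ 2 * w a) + (2 * t) * (φ a * w a)) μ :=
        (hφ2w.const_mul _).add (hφw.const_mul _)
      rw [this, integral_add h12 hw_int,
        integral_add (hφ2w.const_mul _) (hφw.const_mul _), integral_const_mul, integral_const_mul]
      ring
    rw [← hexp]
    exact integral_nonneg_of_ae (hw.mono fun a ha => mul_nonneg (sq_nonneg _) ha)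
  have := discrim_le_zero hquad
  rw [discrim] at this
  nlinarith

theorem tendsto_setIntegral_compl_Icc {g : ℝ → ℝ} (hg : Integrable g) :
    Tendsto (fun R : ℝ => ∫ u in (Set.Icc (-R) R)ᶜ, g u) atTop (𝓝 0) := by
  have hanti : Antitone fun R : ℝ => (Set.Icc (-R) R)ᶜ := fun R R' hRR' =>
    Set.compl_subset_compl.2 (Set.Icc_subset_Icc (neg_le_neg hRR') hRR')
  have hempty : (⋂ R : ℝ, (Set.Icc (-R) R)ᶜ) = ∅ := by
    refine Set.eq_empty_of_forall_notMem fun u hu => ?_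
    exact Set.mem_iInter.1 hu |u| (Set.mem_Icc.2 ⟨neg_abs_le u, le_abs_self u⟩)
  simpa [hempty] using
    tendsto_setIntegral_of_antitone (fun R => measurableSet_Icc.compl) hanti ⟨0, hg.integrableOn⟩

theorem tendsto_integral_mul_comp_sub_mul {ι : Type*} {l : Filter ι} [l.IsCountablyGenerated]
    {ψ f : ℝ → ℝ} {x M : ℝ} {h : ι → ℝ} (hψ : Integrable ψ) (hf : Measurable f)
    (hfM : ∀ y, |f y| ≤ M) (hfx : ContinuousAt f x) (hh : Tendsto h l (𝓝 0)) :
    Tendsto (fun i => ∫ u, ψ u * f (x - h i * u)) l (𝓝 ((∫ u, ψ u) * f x)) := by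
  rw [← integral_mul_const]
  refine tendsto_integral_filter_of_dominated_convergence (fun u => |ψ u| * M)
    (.of_forall fun i => hψ.aestronglyMeasurable.mul (hf.comp (by fun_prop)).aestronglyMeasurable)
    (.of_forall fun i => .of_forall fun u => ?_) (hψ.abs.mul_const M) (.of_forall fun u => ?_)
  · rw [Real.norm_eq_abs, abs_mul]
    exact mul_le_mul_of_nonneg_left (hfM _) (abs_nonneg _)
  · refine tendsto_const_nhds.mul (hfx.tendsto.comp ?_)
    simpa using tendsto_const_nhds.sub (hh.mul_const u)

theorem mul_sq_integral_mul_comp_sub_mul_le {φ f : ℝ → ℝ} {x C M h R : ℝ}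
    (hφ : Measurable φ) (hφC : ∀ u, |φ u| ≤ C) (hφ2 : Integrable fun u => φ u ^ 2)
    (hf : Measurable f) (hf0 : ∀ y, 0 ≤ f y) (hfM : ∀ y, f y ≤ M) (hf_int : Integrable f)
    (hh : 0 < h) (hR : 0 ≤ R) :
    h * (∫ u, φ u * f (x - h * u)) ^ 2
      ≤ 2 * h * (C * M * (2 * R)) ^ 2
        + 2 * M * (∫ y, f y) * ∫ u in (Set.Icc (-R) R)ᶜ, φ u ^ 2 := by
  set w : ℝ → ℝ := fun u => f (x - h * u)
  set S := Set.Icc (-R) R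
  have hw0 : ∀ u, 0 ≤ w u := fun u => hf0 _
  have hwM : ∀ u, ‖w u‖ ≤ M := fun u => by
    rw [Real.norm_eq_abs, abs_of_nonneg (hw0 u)]
    exact hfM _
  have hw_int : Integrable w := by
    simpa using (hf_int.comp_sub_left x).comp_mul_left' hh.ne'
  have hw_mass : h * ∫ u, w u = ∫ y, f y := by
    simpa using (integral_comp_sub_div_mul (fun _ => 1) f x hh).symm
  have hφw : Integrable fun u => φ u * w u :=
    hw_int.bdd_mul hφ.aestronglyMeasurable
      (.of_forall fun u => (Real.norm_eq_abs _).trans_le (hφC u))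
  have hφ2w : Integrable fun u => φ u ^ 2 * w u :=
    hφ2.mul_bdd (hf.comp (by fun_prop)).aestronglyMeasurable (.of_forall hwM)
  set A := ∫ u in S, φ u * w u
  set B := ∫ u in Sᶜ, φ u * w u
  have hsplit : A + B = ∫ u, φ u * w u := integral_add_compl measurableSet_Icc hφw
  have hA : |A| ≤ C * M * (2 * R) := by
    have := norm_setIntegral_le_of_norm_le_const (μ := volume) (s := S) (f := fun u => φ u * w u)
      (C := C * M) measure_Icc_lt_top fun u _ => by
        rw [norm_mul, Real.norm_eq_abs]
        exact mul_le_mul (hφC u) (hwM u) (norm_nonneg _) ((abs_nonneg _).trans (hφC u))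
    rwa [Real.volume_real_Icc_of_le (by linarith), Real.norm_eq_abs, sub_neg_eq_add,
      ← two_mul] at this
  have hM : 0 ≤ M := (hf0 0).trans (hfM 0)
  have hB : B ^ 2 ≤ M * (∫ u in Sᶜ, φ u ^ 2) * ∫ u, w u := by
    have htail : ∫ u in Sᶜ, φ u ^ 2 * w u ≤ M * ∫ u in Sᶜ, φ u ^ 2 := by
      rw [← integral_const_mul]
      refine setIntegral_mono hφ2w.integrableOn (hφ2.integrableOn.const_mul M) fun u => ?_
      rw [mul_comm M]
      exact mul_le_mul_of_nonneg_left ((le_abs_self _).trans (hwM u)) (sq_nonneg _)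
    calc B ^ 2 ≤ (∫ u in Sᶜ, φ u ^ 2 * w u) * ∫ u in Sᶜ, w u :=
          sq_integral_mul_le_integral_sq_mul_mul_integral (.of_forall hw0) hw_int.integrableOn
            hφw.integrableOn hφ2w.integrableOn
      _ ≤ M * (∫ u in Sᶜ, φ u ^ 2) * ∫ u, w u :=
          mul_le_mul htail (setIntegral_le_integral hw_int (.of_forall hw0))
            (setIntegral_nonneg_of_ae (.of_forall hw0)) (by positivity)
  calc h * (∫ u, φ u * w u) ^ 2 = h * (A + B) ^ 2 := by rw [hsplit]
    _ ≤ 2 * h * |A| ^ 2 + 2 * h * B ^ 2 := by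
        rw [sq_abs]; nlinarith [mul_nonneg hh.le (sq_nonneg (A - B))]
    _ ≤ 2 * h * (C * M * (2 * R)) ^ 2 + 2 * h * (M * (∫ u in Sᶜ, φ u ^ 2) * ∫ u, w u) := by
        gcongr
    _ = 2 * h * (C * M * (2 * R)) ^ 2 + 2 * M * (∫ y, f y) * ∫ u in Sᶜ, φ u ^ 2 := by
        rw [← hw_mass]; ring

theorem tendsto_mul_sq_integral_mul_comp_sub_mul {ι : Type*} {l : Filter ι} {φ f : ℝ → ℝ}
    {x C M : ℝ} {h : ι → ℝ}
    (hφ : Measurable φ) (hφC : ∀ u, |φ u| ≤ C) (hφ2 : Integrable fun u => φ u ^ 2)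
    (hf : Measurable f) (hf0 : ∀ y, 0 ≤ f y) (hfM : ∀ y, f y ≤ M) (hf_int : Integrable f)
    (hpos : ∀ i, 0 < h i) (hh : Tendsto h l (𝓝 0)) :
    Tendsto (fun i => h i * (∫ u, φ u * f (x - h i * u)) ^ 2) l (𝓝 0) := by
  refine tendsto_order.2 ⟨fun a ha => .of_forall fun i => ha.trans_le ?_, fun ε hε => ?_⟩
  · exact mul_nonneg (hpos i).le (sq_nonneg _)
  obtain ⟨R, hR0, hR⟩ : ∃ R : ℝ, 0 ≤ R ∧
      2 * M * (∫ y, f y) * ∫ u in (Set.Icc (-R) R)ᶜ, φ u ^ 2 < ε / 2 := by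
    have := (tendsto_setIntegral_compl_Icc hφ2).const_mul (2 * M * ∫ y, f y)
    rw [mul_zero] at this
    exact ((eventually_ge_atTop 0).and (this.eventually (gt_mem_nhds (half_pos hε)))).exists
  have hcore : ∀ᶠ i in l, 2 * h i * (C * M * (2 * R)) ^ 2 < ε / 2 := by
    have : Tendsto (fun i => 2 * h i * (C * M * (2 * R)) ^ 2) l (𝓝 0) := by
      simpa using (hh.const_mul 2).mul_const ((C * M * (2 * R)) ^ 2)
    exact this.eventually (gt_mem_nhds (half_pos hε))
  filter_upwards [hcore] with i hi
  linarith [mul_sq_integral_mul_comp_sub_mul_le (x := x) hφ hφC hφ2 hf hf0 hfM hf_int (hpos i) hR0]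

theorem variance_kdeb_general {Ω : Type*} [MeasurableSpace Ω] (P : Measure Ω) [IsProbabilityMeasure P]
    -- the i.i.d. sample with common density f
    (X : ℕ → Ω → ℝ) (hXmeas : ∀ i, Measurable (X i))
    (hXindep : iIndepFun X P)
    (f : ℝ → ℝ) (hfmeas : Measurable f) (hfnonneg : ∀ y, 0 ≤ f y)
    (hXlaw : ∀ i, Measure.map (X i) P = volume.withDensity fun y => ENNReal.ofReal (f y))
    -- the kernel: twice continuously differentiable, K and K'' bounded and of
    -- bounded variation, ∫ K = 1, ∫ u K(u) du = 0, ∫ u² |K(u)| du < ∞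
    (K : ℝ → ℝ) (hKC2 : ContDiff ℝ 2 K)
    (hKbdd : ∃ M, ∀ u, |K u| ≤ M) (hK''bdd : ∃ M, ∀ u, |deriv (deriv K) u| ≤ M)
    -- ∫ K̃(u)² du < ∞
    (hKtsqint : Integrable (fun u => (ktilde K u) ^ 2) volume)
    -- the point x, f bounded and continuous at x
    (x : ℝ) (hfbdd : ∃ M, ∀ y, |f y| ≤ M) (hfcont : ContinuousAt f x)
    -- bandwidth sequence with h_n → 0 and n h_n → ∞
    (h : ℕ → ℝ) (hpos : ∀ n, 0 < h n)
    (hto0 : Tendsto h atTop (𝓝 0)) :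
    (fun n : ℕ =>
        (∫ ω, (kdeb K X n (h n) x ω - ∫ ω', kdeb K X n (h n) x ω' ∂P) ^ 2 ∂P)
          - 1 / ((n : ℝ) * h n) * f x * (∫ u, (ktilde K u) ^ 2))
      =o[atTop] (fun n : ℕ => 1 / ((n : ℝ) * h n)) := by
  obtain ⟨MK, hMK⟩ := hKbdd
  obtain ⟨MK'', hMK''⟩ := hK''bdd
  obtain ⟨Mf, hMf⟩ := hfbdd
  have hf_int :=
    integrable_of_map_eq_withDensity (hXmeas 0).aemeasurable hfmeas hfnonneg (hXlaw 0)
  have hKt := measurable_ktilde hKC2.continuous.measurable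
  have hKtC : ∀ u, |ktilde K u| ≤ _ := fun u => abs_ktilde_le (hMK u) (hMK'' u)
  have hsq : Tendsto (fun n => ∫ u, ktilde K u ^ 2 * f (x - h n * u)) atTop
      (𝓝 ((∫ u, ktilde K u ^ 2) * f x)) :=
    tendsto_integral_mul_comp_sub_mul hKtsqint hfmeas hMf hfcont hto0
  have hbias : Tendsto (fun n => h n * (∫ u, ktilde K u * f (x - h n * u)) ^ 2) atTop (𝓝 0) :=
    tendsto_mul_sq_integral_mul_comp_sub_mul hKt hKtC hKtsqint hfmeas hfnonneg
      (fun y => (le_abs_self _).trans (hMf y)) hf_int hpos hto0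
  have hvar : ∀ n : ℕ,
      (∫ ω, (kdeb K X n (h n) x ω - ∫ ω', kdeb K X n (h n) x ω' ∂P) ^ 2 ∂P)
        - 1 / ((n : ℝ) * h n) * f x * (∫ u, (ktilde K u) ^ 2)
      = 1 / ((n : ℝ) * h n) * ((∫ u, ktilde K u ^ 2 * f (x - h n * u))
        - h n * (∫ u, ktilde K u * f (x - h n * u)) ^ 2 - (∫ u, ktilde K u ^ 2) * f x) := by
    intro n
    have hmeas : Measurable (kdeb K X n (h n) x) := by unfold kdeb; fun_prop
    rw [← variance_eq_integral hmeas.aemeasurable,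
      variance_kdeb_eq hXmeas hXindep hfmeas hfnonneg hXlaw hKt hKtC n (hpos n) x]
    have := (hpos n).ne'
    field_simp
  simp_rw [hvar]
  have hlim := (hsq.sub hbias).sub_const ((∫ u, ktilde K u ^ 2) * f x)
  rw [sub_zero, sub_self] at hlim
  simpa using (isBigO_refl (fun n : ℕ => 1 / ((n : ℝ) * h n)) atTop).mul_isLittleO
    ((isLittleO_one_iff ℝ).2 hlim)

/-- if `h_n → 0` and `n h_n → ∞` then
`Var(f̂ᵇ_{n,h_n}(x)) = (1/(n h_n)) f(x) ∫ K̃(u)² du + o(1/(n h_n))` as `n → ∞`. -/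
theorem variance_kdeb {Ω : Type*} [MeasurableSpace Ω] (P : Measure Ω) [IsProbabilityMeasure P]
    -- the i.i.d. sample with common density f
    (X : ℕ → Ω → ℝ) (hXmeas : ∀ i, Measurable (X i))
    (hXindep : iIndepFun X P)
    (f : ℝ → ℝ) (hfmeas : Measurable f) (hfnonneg : ∀ y, 0 ≤ f y)
    (hXlaw : ∀ i, Measure.map (X i) P = volume.withDensity fun y => ENNReal.ofReal (f y))
    -- the kernel: twice continuously differentiable, K and K'' bounded and of
    -- bounded variation, ∫ K = 1, ∫ u K(u) du = 0, ∫ u² |K(u)| du < ∞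
    (K : ℝ → ℝ) (hKC2 : ContDiff ℝ 2 K)
    (hKbdd : ∃ M, ∀ u, |K u| ≤ M) (hK''bdd : ∃ M, ∀ u, |deriv (deriv K) u| ≤ M)
    (hKbv : BoundedVariationOn K Set.univ)
    (hK''bv : BoundedVariationOn (deriv (deriv K)) Set.univ)
    (hKint : Integrable K volume) (hKone : (∫ u, K u) = 1)
    (hKuint : Integrable (fun u => u * K u) volume) (hKuzero : (∫ u, u * K u) = 0)
    (hKu2int : Integrable (fun u => u ^ 2 * |K u|) volume)
    -- ∫ K̃(u)² du < ∞
    (hKtsqint : Integrable (fun u => (ktilde K u) ^ 2) volume)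
    -- the point x, f bounded and continuous at x
    (x : ℝ) (hfbdd : ∃ M, ∀ y, |f y| ≤ M) (hfcont : ContinuousAt f x)
    -- bandwidth sequence with h_n → 0 and n h_n → ∞
    (h : ℕ → ℝ) (hpos : ∀ n, 0 < h n)
    (hto0 : Tendsto h atTop (𝓝 0))
    (hnh : Tendsto (fun n : ℕ => (n : ℝ) * h n) atTop atTop) :
    (fun n : ℕ =>
        (∫ ω, (kdeb K X n (h n) x ω - ∫ ω', kdeb K X n (h n) x ω' ∂P) ^ 2 ∂P)
          - 1 / ((n : ℝ) * h n) * f x * (∫ u, (ktilde K u) ^ 2))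
      =o[atTop] (fun n : ℕ => 1 / ((n : ℝ) * h n)) :=
  variance_kdeb_general P X hXmeas hXindep f hfmeas hfnonneg hXlaw K hKC2 hKbdd hK''bdd hKtsqint x
    hfbdd hfcont h hpos hto0
end

section
/- (Liese–Vajda homogeneity characterization, degree 2.) If the Bregman divergence is homogeneous of degree 2, i.e. D_φ(kp, kq) = k² D_φ(p, q) for all p, q, k > 0, then there exist constants c > 0 and a, b ∈ ℝ such that φ(t) = c t² + a t + b for all t > 0. -/
/-!
Differentiating `D_φ(kp, kq) = k² D_φ(p, q)` in `p` gives `φ'(kp) − φ'(kq) = k (φ'(p) − φ'(q))`,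
a Cauchy-type equation whose only solutions on `(0,∞)` are affine. Hence `φ'(t) = 2ct + a`, so
`φ` is a quadratic polynomial on `(0,∞)`, and strict convexity forces `c > 0`.
-/

open Set

def bregmanDiv (φ φ' : ℝ → ℝ) (p q : ℝ) : ℝ :=
  φ p - φ q - (p - q) * φ' q

theorem hasDerivAt_bregmanDiv_left {φ φ' : ℝ → ℝ} {p : ℝ} (hφ : HasDerivAt φ (φ' p) p) (q : ℝ) :
    HasDerivAt (fun x ↦ bregmanDiv φ φ' x q) (φ' p - φ' q) p := by
  have hlin : HasDerivAt (fun x ↦ (x - q) * φ' q) (φ' q) p := by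
    simpa using ((hasDerivAt_id p).sub_const q).mul_const (φ' q)
  exact (hφ.sub_const (φ q)).sub hlin

theorem deriv_sub_eq_mul_of_bregmanDiv_homogeneous {φ φ' : ℝ → ℝ}
    (hderiv : ∀ t ∈ Ioi (0 : ℝ), HasDerivAt φ (φ' t) t)
    (hhom : ∀ p q k : ℝ, 0 < p → 0 < q → 0 < k →
      bregmanDiv φ φ' (k * p) (k * q) = k ^ 2 * bregmanDiv φ φ' p q)
    {p q k : ℝ} (hp : 0 < p) (hq : 0 < q) (hk : 0 < k) :
    φ' (k * p) - φ' (k * q) = k * (φ' p - φ' q) := by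
  have hscaled : HasDerivAt (fun x ↦ bregmanDiv φ φ' (k * x) (k * q))
      ((φ' (k * p) - φ' (k * q)) * k) p := by
    have hmul : HasDerivAt (fun x ↦ k * x) k p := by
      simpa using (hasDerivAt_id p).const_mul k
    exact (hasDerivAt_bregmanDiv_left (hderiv _ (mul_pos hk hp)) (k * q)).comp p hmul
  have hunscaled : HasDerivAt (fun x ↦ k ^ 2 * bregmanDiv φ φ' x q)
      (k ^ 2 * (φ' p - φ' q)) p :=
    (hasDerivAt_bregmanDiv_left (hderiv p hp) q).const_mul _
  have heq : (fun x ↦ bregmanDiv φ φ' (k * x) (k * q))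
      =ᶠ[nhds p] fun x ↦ k ^ 2 * bregmanDiv φ φ' x q := by
    filter_upwards [Ioi_mem_nhds hp] with x hx
    exact hhom x q k hx hq hk
  have h := hscaled.unique (hunscaled.congr_of_eventuallyEq heq)
  refine mul_left_cancel₀ hk.ne' ?_
  linear_combination h

theorem eq_affine_of_sub_eq_mul {g : ℝ → ℝ}
    (hg : ∀ p k : ℝ, 0 < p → 0 < k → g (k * p) - g k = k * (g p - g 1))
    {t : ℝ} (ht : 0 < t) : g t = (g 2 - g 1) * t + (2 * g 1 - g 2) := by
  -- compare the two ways of reaching `g (2t)`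
  have h₁ := hg t 2 ht two_pos
  have h₂ := hg 2 t two_pos ht
  rw [mul_comm t 2] at h₂
  linarith

theorem exists_eq_quadratic_of_hasDerivAt_affine {f : ℝ → ℝ} {a b : ℝ}
    (hf : ∀ t ∈ Ioi (0 : ℝ), HasDerivAt f (a * t + b) t) :
    ∃ C, ∀ t ∈ Ioi (0 : ℝ), f t = a / 2 * t ^ 2 + b * t + C := by
  have hq : ∀ t : ℝ, HasDerivAt (fun t ↦ a / 2 * t ^ 2 + b * t) (a * t + b) t := by
    intro t
    refine (((hasDerivAt_pow 2 t).const_mul (a / 2)).fun_add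
      ((hasDerivAt_id' t).const_mul b)).congr_deriv ?_
    norm_num
    ring
  exact isOpen_Ioi.exists_eq_add_of_deriv_eq isPreconnected_Ioi
    (fun t ht ↦ (hf t ht).differentiableAt.differentiableWithinAt)
    (fun t _ ↦ (hq t).differentiableAt.differentiableWithinAt)
    (fun t ht ↦ (hf t ht).deriv.trans (hq t).deriv.symm)

theorem pos_of_strictConvexOn_of_eqOn_quadratic {s : Set ℝ} {f : ℝ → ℝ} {c a b x y : ℝ}
    (hf : StrictConvexOn ℝ s f) (hquad : ∀ t ∈ s, f t = c * t ^ 2 + a * t + b)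
    (hx : x ∈ s) (hy : y ∈ s) (hxy : x ≠ y) : 0 < c := by
  have hmid : (1 / 2 : ℝ) • x + (1 / 2 : ℝ) • y ∈ s :=
    hf.1 hx hy (by norm_num) (by norm_num) (by norm_num : (1 / 2 : ℝ) + 1 / 2 = 1)
  have hlt := hf.2 hx hy hxy (by norm_num : (0 : ℝ) < 1 / 2) (by norm_num : (0 : ℝ) < 1 / 2)
    (by norm_num)
  rw [hquad _ hmid, hquad x hx, hquad y hy] at hlt
  simp only [smul_eq_mul] at hlt
  -- the midpoint defect of the quadratic is `c (x - y)² / 4`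
  have hsq : 0 < (x - y) ^ 2 := by positivity [sub_ne_zero.mpr hxy]
  nlinarith

theorem liese_vajda_degree_two_general (φ φ' : ℝ → ℝ)
    (hderiv : ∀ t ∈ Set.Ioi (0 : ℝ), HasDerivAt φ (φ' t) t)
    (hconv : StrictConvexOn ℝ (Set.Ioi (0 : ℝ)) φ)
    (hhom : ∀ p q k : ℝ, 0 < p → 0 < q → 0 < k →
      φ (k * p) - φ (k * q) - (k * p - k * q) * φ' (k * q)
        = k ^ 2 * (φ p - φ q - (p - q) * φ' q)) :
    ∃ c a b : ℝ, 0 < c ∧ ∀ t : ℝ, 0 < t → φ t = c * t ^ 2 + a * t + b := by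
  have hscaling : ∀ p k : ℝ, 0 < p → 0 < k → φ' (k * p) - φ' k = k * (φ' p - φ' 1) := by
    intro p k hp hk
    simpa using deriv_sub_eq_mul_of_bregmanDiv_homogeneous hderiv hhom hp one_pos hk
  have haffine : ∀ t ∈ Ioi (0 : ℝ),
      HasDerivAt φ ((φ' 2 - φ' 1) * t + (2 * φ' 1 - φ' 2)) t := fun t ht ↦
    eq_affine_of_sub_eq_mul hscaling ht ▸ hderiv t ht
  obtain ⟨C, hC⟩ := exists_eq_quadratic_of_hasDerivAt_affine haffine
  have hc : 0 < (φ' 2 - φ' 1) / 2 :=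
    pos_of_strictConvexOn_of_eqOn_quadratic hconv hC (mem_Ioi.2 one_pos) (mem_Ioi.2 two_pos)
      (by norm_num)
  exact ⟨_, _, C, hc, hC⟩

/-- Liese–Vajda, degree 2: if the pointwise Bregman divergence
`D_φ(p,q) = φ(p) − φ(q) − (p − q) φ'(q)` of a continuously differentiable,
strictly convex `φ : (0,∞) → ℝ` satisfies `D_φ(kp, kq) = k² D_φ(p,q)` for all
`p, q, k > 0`, then `φ(t) = c t² + a t + b` on `(0,∞)` for some `c > 0`, `a, b ∈ ℝ`. -/
theorem liese_vajda_degree_two (φ φ' : ℝ → ℝ)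
    (hderiv : ∀ t ∈ Set.Ioi (0 : ℝ), HasDerivAt φ (φ' t) t)
    (hderivcont : ContinuousOn φ' (Set.Ioi (0 : ℝ)))
    (hconv : StrictConvexOn ℝ (Set.Ioi (0 : ℝ)) φ)
    (hhom : ∀ p q k : ℝ, 0 < p → 0 < q → 0 < k →
      φ (k * p) - φ (k * q) - (k * p - k * q) * φ' (k * q)
        = k ^ 2 * (φ p - φ q - (p - q) * φ' q)) :
    ∃ c a b : ℝ, 0 < c ∧ ∀ t : ℝ, 0 < t → φ t = c * t ^ 2 + a * t + b :=
  liese_vajda_degree_two_general φ φ' hderiv hconv hhom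
end

section
/- (Liese–Vajda homogeneity characterization, degree 0.) If the Bregman divergence is homogeneous of degree 0, i.e. D_φ(kp, kq) = D_φ(p, q) for all p, q, k > 0, then there exist constants c > 0 and a, b ∈ ℝ such that φ(t) = −c log t + a t + b for all t > 0. -/
/-!
Write `D(p, q) = φ p - φ q - (p - q) φ' q`. Differentiating `D(k p, k q) = D(p, q)` in `p` gives
`k φ'(k p) - k φ'(k q) = φ' p - φ' q`; comparing this identity at `(p, k) = (p, 2)` and `(2, p)`
eliminates `φ'(2 p)` and forces `φ' t = a - c / t`. Strict convexity makes `φ'` strictly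
increasing, so `c > 0`, and integrating gives `φ t = -c log t + a t + b`.
-/

open Set

namespace LieseVajda

def bregmanDiv (φ φ' : ℝ → ℝ) (p q : ℝ) : ℝ := φ p - φ q - (p - q) * φ' q

variable {φ φ' : ℝ → ℝ}

theorem hasDerivAt_bregmanDiv {p : ℝ} (q : ℝ) (hφ : HasDerivAt φ (φ' p) p) :
    HasDerivAt (fun x => bregmanDiv φ φ' x q) (φ' p - φ' q) p :=
  ((hφ.sub_const (φ q)).fun_sub (((hasDerivAt_id' p).sub_const q).mul_const (φ' q))).congr_deriv
    (by ring)

theorem scale_identity_of_bregmanDiv_scale_invariant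
    (hderiv : ∀ t ∈ Ioi (0 : ℝ), HasDerivAt φ (φ' t) t)
    (hhom : ∀ p q k : ℝ, 0 < p → 0 < q → 0 < k →
      bregmanDiv φ φ' (k * p) (k * q) = bregmanDiv φ φ' p q)
    {p q k : ℝ} (hp : 0 < p) (hq : 0 < q) (hk : 0 < k) :
    k * φ' (k * p) - k * φ' (k * q) = φ' p - φ' q := by
  have hscaled : HasDerivAt (fun x => bregmanDiv φ φ' (k * x) (k * q))
      ((φ' (k * p) - φ' (k * q)) * k) p :=
    (hasDerivAt_bregmanDiv (k * q) (hderiv _ (mul_pos hk hp))).comp p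
      (by simpa using (hasDerivAt_id p).const_mul k)
  have heq : (fun x => bregmanDiv φ φ' (k * x) (k * q)) =ᶠ[nhds p]
      fun x => bregmanDiv φ φ' x q :=
    Filter.eventuallyEq_of_mem (Ioi_mem_nhds hp) fun x hx => hhom x q k hx hq hk
  have := (hscaled.congr_of_eventuallyEq heq.symm).unique
    (hasDerivAt_bregmanDiv q (hderiv p hp))
  linarith

theorem exists_eq_sub_div_of_scale_identity
    (h : ∀ p q k : ℝ, 0 < p → 0 < q → 0 < k →
      k * φ' (k * p) - k * φ' (k * q) = φ' p - φ' q) :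
    ∃ a c : ℝ, ∀ t : ℝ, 0 < t → φ' t = a - c / t := by
  refine ⟨2 * φ' 2 - φ' 1, 2 * (φ' 2 - φ' 1), fun t ht => ?_⟩
  have h₁ := h t 1 2 ht one_pos two_pos
  have h₂ := h 2 1 t two_pos one_pos ht
  rw [mul_one] at h₁ h₂
  rw [mul_comm t 2] at h₂
  field_simp
  nlinarith

theorem exists_eq_neg_mul_log_add {a c : ℝ}
    (hφ : ∀ t ∈ Ioi (0 : ℝ), HasDerivAt φ (a - c / t) t) :
    ∃ b : ℝ, ∀ t : ℝ, 0 < t → φ t = -c * Real.log t + a * t + b := by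
  have hlog : ∀ t ∈ Ioi (0 : ℝ),
      HasDerivAt (fun x => -c * Real.log x + a * x) (a - c / t) t := fun t ht =>
    (((Real.hasDerivAt_log (ne_of_gt ht)).const_mul (-c)).fun_add
      ((hasDerivAt_id' t).const_mul a)).congr_deriv (by ring)
  obtain ⟨b, hb⟩ := isOpen_Ioi.exists_eq_add_of_deriv_eq isPreconnected_Ioi
    (fun t ht => (hφ t ht).differentiableAt.differentiableWithinAt)
    (fun t ht => (hlog t ht).differentiableAt.differentiableWithinAt)
    (fun t ht => (hφ t ht).deriv.trans (hlog t ht).deriv.symm)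
  exact ⟨b, fun t ht => hb ht⟩

end LieseVajda

open LieseVajda in
theorem liese_vajda_degree_zero_general (φ φ' : ℝ → ℝ)
    (hderiv : ∀ t ∈ Set.Ioi (0 : ℝ), HasDerivAt φ (φ' t) t)
    (hconv : StrictConvexOn ℝ (Set.Ioi (0 : ℝ)) φ)
    (hhom : ∀ p q k : ℝ, 0 < p → 0 < q → 0 < k →
      φ (k * p) - φ (k * q) - (k * p - k * q) * φ' (k * q)
        = φ p - φ q - (p - q) * φ' q) :
    ∃ c a b : ℝ, 0 < c ∧ ∀ t : ℝ, 0 < t → φ t = -c * Real.log t + a * t + b := by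
  obtain ⟨a, c, hφ'⟩ := exists_eq_sub_div_of_scale_identity fun p q k hp hq hk =>
    scale_identity_of_bregmanDiv_scale_invariant hderiv hhom hp hq hk
  have hc : 0 < c := by
    have hmono := hconv.strictMonoOn_deriv fun t ht => (hderiv t ht).differentiableAt
    have h12 : deriv φ 1 < deriv φ 2 :=
      hmono (mem_Ioi.2 one_pos) (mem_Ioi.2 two_pos) one_lt_two
    rw [(hderiv 1 (mem_Ioi.2 one_pos)).deriv, (hderiv 2 (mem_Ioi.2 two_pos)).deriv,
      hφ' 1 one_pos, hφ' 2 two_pos] at h12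
    linarith
  obtain ⟨b, hb⟩ := exists_eq_neg_mul_log_add fun t ht => hφ' t ht ▸ hderiv t ht
  exact ⟨c, a, b, hc, hb⟩

/-- Liese–Vajda, degree 0: if the pointwise Bregman divergence
`D_φ(p,q) = φ(p) − φ(q) − (p − q) φ'(q)` of a continuously differentiable,
strictly convex `φ : (0,∞) → ℝ` satisfies `D_φ(kp, kq) = D_φ(p,q)` for all
`p, q, k > 0`, then `φ(t) = −c log t + a t + b` on `(0,∞)` for some `c > 0`,
`a, b ∈ ℝ`. -/
theorem liese_vajda_degree_zero (φ φ' : ℝ → ℝ)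
    (hderiv : ∀ t ∈ Set.Ioi (0 : ℝ), HasDerivAt φ (φ' t) t)
    (hderivcont : ContinuousOn φ' (Set.Ioi (0 : ℝ)))
    (hconv : StrictConvexOn ℝ (Set.Ioi (0 : ℝ)) φ)
    (hhom : ∀ p q k : ℝ, 0 < p → 0 < q → 0 < k →
      φ (k * p) - φ (k * q) - (k * p - k * q) * φ' (k * q)
        = φ p - φ q - (p - q) * φ' q) :
    ∃ c a b : ℝ, 0 < c ∧ ∀ t : ℝ, 0 < t → φ t = -c * Real.log t + a * t + b :=
  liese_vajda_degree_zero_general φ φ' hderiv hconv hhom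
end

section
/- (Theorem 4: asymptotic null distribution of the Bregman divergence statistic.) Let F ∈ ℝ^{M₀} be a probability vector with strictly positive entries. Let (P̂_n) and (Q̂_n) be sequences of random vectors in ℝ^{M₀} such that the joint rescaled vector √n·((P̂_n − F), (Q̂_n − F)) ∈ ℝ^{2M₀} converges in distribution to a centered Gaussian law μ on ℝ^{2M₀}. Then 2n·D(P̂_n, Q̂_n) converges in distribution to the pushforward of μ under the map (x, y) ↦ Σ_{i=1}^{M₀} φ''(F_i) (x_i − y_i)², i.e. to the law of the quadratic form (X − Y)ᵀ diag(φ''(F_1), …, φ''(F_{M₀})) (X − Y) where (X, Y) has law μ. -/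
/-!
Write `Zₙ = √n (P̂ₙ − F, Q̂ₙ − F)`. Then `2n·D(P̂ₙ, Q̂ₙ) = Tₙ(Zₙ)` with
`Tₙ(x, y) = 2n·D(F + x/√n, F + y/√n)`, and a second-order Taylor expansion of `φ` at each `Fᵢ`
shows that `Tₙ` converges to `h(x, y) = Σᵢ φ''(Fᵢ)(xᵢ − yᵢ)²` uniformly on compact sets.
A weakly convergent sequence puts little mass far out (portmanteau), so `Tₙ(Zₙ) − h(Zₙ) → 0`
in probability, and Slutsky's lemma with the continuous mapping theorem gives
`Tₙ(Zₙ) → h(Z)` in distribution.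
-/

open MeasureTheory ProbabilityTheory Filter Topology

/-- The Bregman divergence on `ℝ^{M₀}`:
`D(p,q) = Σ_i [φ(p_i) − φ(q_i) − (p_i − q_i) φ'(q_i)]`. -/
noncomputable def bregmanVec (φ : ℝ → ℝ) {M₀ : ℕ} (p q : Fin M₀ → ℝ) : ℝ :=
  ∑ i, (φ (p i) - φ (q i) - (p i - q i) * deriv φ (q i))

open Set
open scoped ENNReal

lemma tendstoUniformlyOn_finsetSum {ι κ α G : Type*} [AddCommGroup G] [UniformSpace G]
    [IsUniformAddGroup G] {l : Filter κ} {s : Set α} (t : Finset ι) {F : ι → κ → α → G}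
    {f : ι → α → G} (h : ∀ i ∈ t, TendstoUniformlyOn (F i) (f i) l s) :
    TendstoUniformlyOn (fun n x => ∑ i ∈ t, F i n x) (fun x => ∑ i ∈ t, f i x) l s := by
  classical
  induction t using Finset.induction_on with
  | empty => simpa using (tendsto_const_nhds (x := (0 : G))).tendstoUniformlyOn_const s
  | insert i t hi ih =>
    simp only [Finset.sum_insert hi]
    exact (h i (Finset.mem_insert_self i t)).add
      (ih fun j hj => h j (Finset.mem_insert_of_mem hj))

namespace MeasureTheory

variable {ι Ω Ω' E : Type*} {mΩ : MeasurableSpace Ω} {mΩ' : MeasurableSpace Ω'}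
  {P : Measure Ω} [IsProbabilityMeasure P] {μ : Measure Ω'} [IsProbabilityMeasure μ]
  [MeasurableSpace E] {l : Filter ι} {X : ι → Ω → E} {Z : Ω' → E}

lemma tendstoInDistribution_iff_forall_integral_tendsto [TopologicalSpace E]
    [OpensMeasurableSpace E] (hX : ∀ i, AEMeasurable (X i) P) (hZ : AEMeasurable Z μ) :
    TendstoInDistribution X l Z (fun _ => P) μ ↔
      ∀ g : BoundedContinuousFunction E ℝ,
        Tendsto (fun i => ∫ ω, g (X i ω) ∂P) l (𝓝 (∫ ω, g (Z ω) ∂μ)) := by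
  refine ⟨fun h g => ?_, fun h => ⟨hX, hZ, ?_⟩⟩
  · simpa only [ProbabilityMeasure.coe_mk, integral_map hZ g.continuous.aestronglyMeasurable,
      integral_map (hX _) g.continuous.aestronglyMeasurable] using
      ProbabilityMeasure.tendsto_iff_forall_integral_tendsto.mp h.tendsto g
  · refine ProbabilityMeasure.tendsto_iff_forall_integral_tendsto.mpr fun g => ?_
    simpa only [ProbabilityMeasure.coe_mk, integral_map hZ g.continuous.aestronglyMeasurable,
      integral_map (hX _) g.continuous.aestronglyMeasurable] using h g

variable [NormedAddCommGroup E] [BorelSpace E]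

lemma TendstoInDistribution.exists_eventually_measure_norm_ge_lt
    (hX : TendstoInDistribution X l Z (fun _ => P) μ) {η : ℝ≥0∞} (hη : 0 < η) :
    ∃ R : ℝ, ∀ᶠ i in l, P {ω | R ≤ ‖X i ω‖} < η := by
  have htail : Tendsto (fun R : ℕ => μ.map Z {z | (R : ℝ) ≤ ‖z‖}) atTop (𝓝 0) := by
    have hempty : ⋂ R : ℕ, {z : E | (R : ℝ) ≤ ‖z‖} = ∅ :=
      iInter_eq_empty_iff.mpr fun z => (exists_nat_gt ‖z‖).imp fun _ hR => not_le.mpr hR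
    simpa [hempty, Function.comp_def] using tendsto_measure_iInter_atTop
      (s := fun R : ℕ => {z : E | (R : ℝ) ≤ ‖z‖})
      (fun _ => (measurableSet_le measurable_const measurable_norm).nullMeasurableSet)
      (fun a b hab z (hz : (b : ℝ) ≤ ‖z‖) => show (a : ℝ) ≤ ‖z‖ from
        (Nat.cast_le.mpr hab).trans hz)
      ⟨0, measure_ne_top (μ.map Z) _⟩
  obtain ⟨R, hR⟩ := (htail.eventually (gt_mem_nhds hη)).exists
  have hclosed : IsClosed {z : E | (R : ℝ) ≤ ‖z‖} := isClosed_le continuous_const continuous_norm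
  refine ⟨R, ?_⟩
  filter_upwards [eventually_lt_of_limsup_lt
    ((ProbabilityMeasure.limsup_measure_closed_le_of_tendsto hX.tendsto hclosed).trans_lt hR)]
    with i hi
  rwa [ProbabilityMeasure.coe_mk,
    Measure.map_apply_of_aemeasurable (hX.forall_aemeasurable i) hclosed.measurableSet] at hi

variable [ProperSpace E] {G : Type*} [NormedAddCommGroup G] {T : ι → E → G} {h : E → G}

lemma TendstoInDistribution.tendstoInMeasure_sub_of_tendstoLocallyUniformly
    (hX : TendstoInDistribution X l Z (fun _ => P) μ) (hT : TendstoLocallyUniformly T h l) :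
    TendstoInMeasure P (fun i ω => T i (X i ω) - h (X i ω)) l 0 := by
  rw [tendstoInMeasure_iff_norm]
  intro ε hε
  rw [ENNReal.tendsto_nhds_zero]
  intro η hη
  obtain ⟨R, hR⟩ := hX.exists_eventually_measure_norm_ge_lt hη
  have hunif := tendstoLocallyUniformly_iff_forall_isCompact.mp hT _ (isCompact_closedBall 0 R)
  filter_upwards [hR, Metric.tendstoUniformlyOn_iff.mp hunif ε hε] with i hiR hiε
  refine le_trans (measure_mono fun ω hω => ?_) hiR.le
  by_contra hlt
  have := hiε (X i ω) (mem_closedBall_zero_iff.mpr (not_le.mp hlt).le)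
  rw [dist_comm, dist_eq_norm] at this
  exact (not_le.mpr this) (by simpa using hω)

theorem TendstoInDistribution.comp_of_tendstoLocallyUniformly [l.IsCountablyGenerated]
    [MeasurableSpace G] [BorelSpace G] [SecondCountableTopology G]
    (hX : TendstoInDistribution X l Z (fun _ => P) μ) (hT : TendstoLocallyUniformly T h l)
    (hT_meas : ∀ i, Measurable (T i)) (hh : Continuous h) :
    TendstoInDistribution (fun i => T i ∘ X i) l (h ∘ Z) (fun _ => P) μ :=
  tendstoInDistribution_of_tendstoInMeasure_sub _ _ (hX.continuous_comp hh)
    (hX.tendstoInMeasure_sub_of_tendstoLocallyUniformly hT)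
    fun i => (hT_meas i).comp_aemeasurable (hX.forall_aemeasurable i)

end MeasureTheory

noncomputable def bregman (φ : ℝ → ℝ) (p q : ℝ) : ℝ := φ p - φ q - (p - q) * deriv φ q

lemma bregmanVec_eq_sum (φ : ℝ → ℝ) {M₀ : ℕ} (p q : Fin M₀ → ℝ) :
    bregmanVec φ p q = ∑ i, bregman φ (p i) (q i) := rfl

lemma abs_bregman_sub_le {φ : ℝ → ℝ} (hφ : ContDiff ℝ 2 φ) {a K p q : ℝ}
    (hK : ∀ t ∈ uIcc q p, |deriv (deriv φ) t - a| ≤ K) :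
    |bregman φ p q - a / 2 * (p - q) ^ 2| ≤ K * (p - q) ^ 2 := by
  obtain ⟨hφd, -, hφ'⟩ := contDiff_succ_iff_deriv.mp (show ContDiff ℝ (1 + 1) φ from hφ)
  have hφ'd : Differentiable ℝ (deriv φ) := hφ'.differentiable one_ne_zero
  have hK0 : 0 ≤ K := (abs_nonneg _).trans (hK q left_mem_uIcc)
  have hslope : ∀ t ∈ uIcc q p, ‖deriv φ t - deriv φ q - a * (t - q)‖ ≤ K * |p - q| := by
    intro t ht
    have hderiv : ∀ u ∈ uIcc q p, HasDerivWithinAt (fun u => deriv φ u - a * u)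
        (deriv (deriv φ) u - a) (uIcc q p) u := fun u _ =>
      ((hφ'd u).hasDerivAt.sub ((hasDerivAt_id u).const_mul a)).hasDerivWithinAt.congr_deriv
        (by simp)
    have := (convex_uIcc q p).norm_image_sub_le_of_norm_hasDerivWithin_le hderiv hK
      left_mem_uIcc ht
    calc ‖deriv φ t - deriv φ q - a * (t - q)‖
        = ‖(deriv φ t - a * t) - (deriv φ q - a * q)‖ := by ring_nf
      _ ≤ K * |t - q| := this
      _ ≤ K * |p - q| := mul_le_mul_of_nonneg_left (abs_sub_left_of_mem_uIcc ht) hK0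
  have hderiv : ∀ u ∈ uIcc q p, HasDerivWithinAt
      (fun u => φ u - deriv φ q * u - a / 2 * (u - q) ^ 2)
      (deriv φ u - deriv φ q - a * (u - q)) (uIcc q p) u := fun u _ =>
    (((hφd u).hasDerivAt.sub ((hasDerivAt_id u).const_mul _)).sub
      ((((hasDerivAt_id u).sub_const q).pow 2).const_mul (a / 2))).hasDerivWithinAt.congr_deriv
        (by simp only [id, mul_one, Nat.cast_ofNat]; ring)
  have := (convex_uIcc q p).norm_image_sub_le_of_norm_hasDerivWithin_le hderiv hslope
    left_mem_uIcc right_mem_uIcc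
  calc |bregman φ p q - a / 2 * (p - q) ^ 2|
      = ‖(φ p - deriv φ q * p - a / 2 * (p - q) ^ 2)
          - (φ q - deriv φ q * q - a / 2 * (q - q) ^ 2)‖ := by
        rw [Real.norm_eq_abs, bregman]; ring_nf
    _ ≤ K * |p - q| * ‖p - q‖ := this
    _ = K * (p - q) ^ 2 := by rw [Real.norm_eq_abs, mul_assoc, ← abs_mul, ← sq, abs_sq]

lemma ContDiff.continuous_deriv_deriv {φ : ℝ → ℝ} (hφ : ContDiff ℝ 2 φ) :
    Continuous (deriv (deriv φ)) :=
  (contDiff_succ_iff_deriv.mp (show ContDiff ℝ (1 + 1) φ from hφ)).2.2.continuous_deriv le_rfl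

lemma tendstoUniformlyOn_two_mul_bregman_rescaled {φ : ℝ → ℝ} (hφ : ContDiff ℝ 2 φ) (c R : ℝ) :
    TendstoUniformlyOn
      (fun (n : ℕ) (w : ℝ × ℝ) => 2 * n * bregman φ (c + w.1 / √n) (c + w.2 / √n))
      (fun w => deriv (deriv φ) c * (w.1 - w.2) ^ 2) atTop (Metric.closedBall 0 R) := by
  rw [Metric.tendstoUniformlyOn_iff]
  intro ε hε
  set η := ε / (8 * (R ^ 2 + 1))
  have hη : 0 < η := by positivity
  obtain ⟨δ, hδ, hφ''δ⟩ := Metric.continuousAt_iff.mp hφ.continuous_deriv_deriv.continuousAt η hη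
  have hshrink : Tendsto (fun n : ℕ => R / √n) atTop (𝓝 0) :=
    tendsto_const_nhds.div_atTop (Real.tendsto_sqrt_atTop.comp tendsto_natCast_atTop_atTop)
  filter_upwards [hshrink.eventually (gt_mem_nhds hδ), eventually_gt_atTop 0] with n hRn hn
  rintro ⟨x, y⟩ hw
  have hs : 0 < √(n : ℝ) := Real.sqrt_pos.mpr (Nat.cast_pos.mpr hn)
  have hx : |x| ≤ R := (norm_fst_le (x, y)).trans (mem_closedBall_zero_iff.mp hw)
  have hy : |y| ≤ R := (norm_snd_le (x, y)).trans (mem_closedBall_zero_iff.mp hw)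
  have hxs : |x / √n| ≤ R / √n := by rw [abs_div, abs_of_pos hs]; gcongr
  have hys : |y / √n| ≤ R / √n := by rw [abs_div, abs_of_pos hs]; gcongr
  have hK : ∀ t ∈ uIcc (c + y / √n) (c + x / √n), |deriv (deriv φ) t - deriv (deriv φ) c| ≤ η := by
    intro t ht
    refine (hφ''δ ?_).le
    rw [Real.dist_eq, abs_lt]
    rw [abs_le] at hxs hys
    rcases mem_uIcc.mp ht with ⟨h1, h2⟩ | ⟨h1, h2⟩ <;> constructor <;> linarith
  have hsq : (x - y) ^ 2 = n * (c + x / √n - (c + y / √n)) ^ 2 := by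
    rw [show c + x / √n - (c + y / √n) = (x - y) / √n by ring, div_pow,
      Real.sq_sqrt (Nat.cast_nonneg n)]
    field_simp
  have hxy : (x - y) ^ 2 ≤ 4 * R ^ 2 := by
    rw [abs_le] at hx hy
    nlinarith
  calc dist (deriv (deriv φ) c * (x - y) ^ 2) (2 * n * bregman φ (c + x / √n) (c + y / √n))
      = 2 * n * |bregman φ (c + x / √n) (c + y / √n)
          - deriv (deriv φ) c / 2 * (c + x / √n - (c + y / √n)) ^ 2| := by
        rw [dist_comm, Real.dist_eq, hsq, ← abs_of_pos (by positivity : (0 : ℝ) < 2 * n),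
          ← abs_mul, abs_of_pos (by positivity : (0 : ℝ) < 2 * n)]
        ring_nf
    _ ≤ 2 * n * (η * (c + x / √n - (c + y / √n)) ^ 2) := by
        gcongr; exact abs_bregman_sub_le hφ hK
    _ = 2 * η * (x - y) ^ 2 := by rw [hsq]; ring
    _ ≤ 2 * η * (4 * R ^ 2) := by gcongr
    _ = ε * (R ^ 2 / (R ^ 2 + 1)) := by simp only [η]; field_simp; ring
    _ < ε := mul_lt_of_lt_one_right hε ((div_lt_one (by positivity)).mpr (lt_add_one _))

noncomputable def rescaledBregman (φ : ℝ → ℝ) {M₀ : ℕ} (F : Fin M₀ → ℝ) (n : ℕ)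
    (z : Fin M₀ ⊕ Fin M₀ → ℝ) : ℝ :=
  2 * n * bregmanVec φ (fun i => F i + z (.inl i) / √n) (fun i => F i + z (.inr i) / √n)

lemma two_mul_bregmanVec_eq_rescaledBregman (φ : ℝ → ℝ) {M₀ : ℕ} (F p q : Fin M₀ → ℝ) (n : ℕ) :
    2 * n * bregmanVec φ p q = rescaledBregman φ F n
      (Sum.elim (fun i => √n * (p i - F i)) (fun i => √n * (q i - F i))) := by
  rcases Nat.eq_zero_or_pos n with rfl | hn
  · simp [rescaledBregman] -- both sides vanish, since `√0 = 0` and `x / 0 = 0`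
  have hs : √(n : ℝ) ≠ 0 := (Real.sqrt_pos.mpr (Nat.cast_pos.mpr hn)).ne'
  simp only [rescaledBregman, Sum.elim_inl, Sum.elim_inr, mul_div_cancel_left₀ _ hs,
    add_sub_cancel]

lemma continuous_rescaledBregman {φ : ℝ → ℝ} (hφ : ContDiff ℝ 2 φ) {M₀ : ℕ} (F : Fin M₀ → ℝ)
    (n : ℕ) : Continuous (rescaledBregman φ F n) := by
  have hφ_cont := hφ.continuous
  have hφ'_cont := hφ.continuous_deriv (by norm_num)
  unfold rescaledBregman bregmanVec
  fun_prop

lemma tendstoLocallyUniformly_rescaledBregman {φ : ℝ → ℝ} (hφ : ContDiff ℝ 2 φ) {M₀ : ℕ}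
    (F : Fin M₀ → ℝ) :
    TendstoLocallyUniformly (rescaledBregman φ F)
      (fun z => ∑ i, deriv (deriv φ) (F i) * (z (.inl i) - z (.inr i)) ^ 2) atTop := by
  rw [tendstoLocallyUniformly_iff_forall_isCompact]
  intro K hK
  obtain ⟨R, hKR⟩ := hK.isBounded.subset_closedBall 0
  refine TendstoUniformlyOn.mono ?_ hKR
  unfold rescaledBregman
  simp only [bregmanVec_eq_sum, Finset.mul_sum]
  refine tendstoUniformlyOn_finsetSum _ fun i _ => ?_
  refine ((tendstoUniformlyOn_two_mul_bregman_rescaled hφ (F i) R).comp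
    fun z : Fin M₀ ⊕ Fin M₀ → ℝ => (z (.inl i), z (.inr i))).mono fun z hz => ?_
  simp only [mem_preimage, mem_closedBall_zero_iff, Prod.norm_def] at hz ⊢
  exact max_le ((norm_le_pi_norm z _).trans hz) ((norm_le_pi_norm z _).trans hz)

theorem bregman_null_distribution_general
    {Ω : Type*} [MeasurableSpace Ω] (P : Measure Ω) [IsProbabilityMeasure P]
    (M₀ : ℕ)
    (φ : ℝ → ℝ) (hφC2 : ContDiff ℝ 2 φ)
    (F : Fin M₀ → ℝ)
    -- the sequences of random vectors
    (Phat Qhat : ℕ → Ω → (Fin M₀ → ℝ))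
    (hPmeas : ∀ n, Measurable (Phat n)) (hQmeas : ∀ n, Measurable (Qhat n))
    (μ : Measure ((Fin M₀ ⊕ Fin M₀) → ℝ)) [IsProbabilityMeasure μ]
    -- √n((P̂ₙ − F),(Q̂ₙ − F)) converges in distribution to μ
    (hconv : ∀ g : BoundedContinuousFunction ((Fin M₀ ⊕ Fin M₀) → ℝ) ℝ,
      Tendsto
        (fun n : ℕ => ∫ ω,
          g (Sum.elim (fun i => Real.sqrt n * (Phat n ω i - F i))
              (fun i => Real.sqrt n * (Qhat n ω i - F i))) ∂P)
        atTop (𝓝 (∫ z, g z ∂μ))) :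
    -- conclusion: 2n·D(P̂ₙ,Q̂ₙ) →d pushforward of μ under the quadratic form
    ∀ g : BoundedContinuousFunction ℝ ℝ,
      Tendsto
        (fun n : ℕ => ∫ ω,
          g (2 * n * bregmanVec φ (Phat n ω) (Qhat n ω)) ∂P)
        atTop
        (𝓝 (∫ z, g (∑ i, deriv (deriv φ) (F i) * (z (Sum.inl i) - z (Sum.inr i)) ^ 2) ∂μ)) := by
  intro g
  set Z : ℕ → Ω → (Fin M₀ ⊕ Fin M₀ → ℝ) := fun n ω =>
    Sum.elim (fun i => √n * (Phat n ω i - F i)) (fun i => √n * (Qhat n ω i - F i))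
  have hZ_meas : ∀ n, AEMeasurable (Z n) P := fun n =>
    (measurable_pi_iff.mpr fun j => by
      rcases j with i | i <;> simp only [Z, Sum.elim_inl, Sum.elim_inr] <;> fun_prop).aemeasurable
  have hZ : TendstoInDistribution Z atTop id (fun _ => P) μ :=
    (tendstoInDistribution_iff_forall_integral_tendsto hZ_meas aemeasurable_id).mpr hconv
  have hlim := hZ.comp_of_tendstoLocallyUniformly (tendstoLocallyUniformly_rescaledBregman hφC2 F)
    (fun n => (continuous_rescaledBregman hφC2 F n).measurable) (by fun_prop)
  simp only [two_mul_bregmanVec_eq_rescaledBregman φ F]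
  exact (tendstoInDistribution_iff_forall_integral_tendsto hlim.forall_aemeasurable
    hlim.aemeasurable_limit).mp hlim g

/-- Theorem 4: asymptotic null distribution of the Bregman
divergence statistic: if `√n((P̂ₙ − F), (Q̂ₙ − F))` converges in distribution to a
centered Gaussian law `μ` on `ℝ^{2M₀}`, then `2n·D(P̂ₙ, Q̂ₙ)` converges in
distribution to the pushforward of `μ` under
`(x,y) ↦ Σ_i φ''(F_i)(x_i − y_i)²`. -/
theorem bregman_null_distribution
    {Ω : Type*} [MeasurableSpace Ω] (P : Measure Ω) [IsProbabilityMeasure P]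
    (M₀ : ℕ) (hM₀ : 1 ≤ M₀)
    (φ : ℝ → ℝ) (hφC2 : ContDiff ℝ 2 φ) (hφconv : StrictConvexOn ℝ Set.univ φ)
    -- F is a probability vector with strictly positive entries
    (F : Fin M₀ → ℝ) (hFpos : ∀ i, 0 < F i) (hFsum : (∑ i, F i) = 1)
    -- the sequences of random vectors
    (Phat Qhat : ℕ → Ω → (Fin M₀ → ℝ))
    (hPmeas : ∀ n, Measurable (Phat n)) (hQmeas : ∀ n, Measurable (Qhat n))
    -- μ is a centered Gaussian law on ℝ^{2M₀}
    (μ : Measure ((Fin M₀ ⊕ Fin M₀) → ℝ)) [IsProbabilityMeasure μ]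
    (hμgauss : ∃ A : Matrix (Fin M₀ ⊕ Fin M₀) (Fin M₀ ⊕ Fin M₀) ℝ,
      μ = Measure.map (fun z => A.mulVec z)
        (Measure.pi fun _ : Fin M₀ ⊕ Fin M₀ => gaussianReal 0 1))
    -- √n((P̂ₙ − F),(Q̂ₙ − F)) converges in distribution to μ
    (hconv : ∀ g : BoundedContinuousFunction ((Fin M₀ ⊕ Fin M₀) → ℝ) ℝ,
      Tendsto
        (fun n : ℕ => ∫ ω,
          g (Sum.elim (fun i => Real.sqrt n * (Phat n ω i - F i))
              (fun i => Real.sqrt n * (Qhat n ω i - F i))) ∂P)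
        atTop (𝓝 (∫ z, g z ∂μ))) :
    -- conclusion: 2n·D(P̂ₙ,Q̂ₙ) →d pushforward of μ under the quadratic form
    ∀ g : BoundedContinuousFunction ℝ ℝ,
      Tendsto
        (fun n : ℕ => ∫ ω,
          g (2 * n * bregmanVec φ (Phat n ω) (Qhat n ω)) ∂P)
        atTop
        (𝓝 (∫ z, g (∑ i, deriv (deriv φ) (F i) * (z (Sum.inl i) - z (Sum.inr i)) ^ 2) ∂μ)) :=
  bregman_null_distribution_general P M₀ φ hφC2 F Phat Qhat hPmeas hQmeas μ hconv
end

section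
/- (Lemma 3: first-order stochastic Taylor expansion of the Bregman divergence statistic.) Let F, G ∈ ℝ^{M₀}. Let (P̂_n) and (Q̂_n) be sequences of random vectors in ℝ^{M₀} such that √n·((P̂_n − F), (Q̂_n − G)) converges in distribution to some probability law on ℝ^{2M₀}. Define K, N ∈ ℝ^{M₀} by K_i := φ'(F_i) − φ'(G_i) and N_i := −(F_i − G_i) φ''(G_i). Then the remainder R_n := D(P̂_n, Q̂_n) − D(F, G) − Kᵀ(P̂_n − F) − Nᵀ(Q̂_n − G) satisfies √n·R_n → 0 in probability as n → ∞. -/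
/-!
The map `(p, q) ↦ D(p, q)` is differentiable at `(F, G)` with gradient `(K, N)`, so
`Rₙ = r(Xₙ)` for `Xₙ = (P̂ₙ − F, Q̂ₙ − G)` and a remainder `r(h) = o(‖h‖)`. Since `√n Xₙ`
converges in distribution, its laws form a tight family: for every `δ` there is `M` with
`‖√n Xₙ‖ ≤ M` outside an event of probability `≤ δ`, uniformly in `n`. On that event
`‖Xₙ‖ ≤ M / √n → 0`, so eventually `√n |r(Xₙ)| ≤ (ε / M) ‖√n Xₙ‖ ≤ ε`.
-/

open MeasureTheory ProbabilityTheory Filter Topology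

open scoped BoundedContinuousFunction

theorem Asymptotics.IsLittleO.eventually_norm_smul_lt {E F : Type*} [NormedAddCommGroup E]
    [NormedSpace ℝ E] [NormedAddCommGroup F] [NormedSpace ℝ F] {g : E → F}
    (hg : g =o[𝓝 0] fun x => x) {ε : ℝ} (hε : 0 < ε) (M : ℝ) :
    ∀ᶠ c : ℝ in atTop, ∀ x, ‖c • x‖ ≤ M → ‖c • g x‖ < ε := by
  set k := ε / (|M| + 1) with hk
  have hk0 : 0 < k := by positivity
  obtain ⟨η, hη, hgη⟩ := Metric.eventually_nhds_iff.mp (hg.def hk0)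
  filter_upwards [eventually_gt_atTop (|M| / η)] with c hc x hx
  have hc0 : 0 < c := lt_of_le_of_lt (by positivity) hc
  have hcx : ‖c • x‖ = c * ‖x‖ := by rw [norm_smul, Real.norm_of_nonneg hc0.le]
  have hxη : ‖x‖ < η := by
    rw [div_lt_iff₀ hη] at hc
    nlinarith [le_abs_self M]
  calc ‖c • g x‖ = c * ‖g x‖ := by rw [norm_smul, Real.norm_of_nonneg hc0.le]
    _ ≤ c * (k * ‖x‖) := by gcongr; exact hgη (by simpa using hxη)
    _ = k * ‖c • x‖ := by rw [hcx]; ring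
    _ ≤ k * |M| := by gcongr; exact hx.trans (le_abs_self M)
    _ < ε := by
      rw [hk, div_mul_eq_mul_div, div_lt_iff₀ (by positivity)]
      nlinarith [abs_nonneg M]

namespace MeasureTheory

theorem isTightMeasureSet_range_of_tendsto {E : Type*} [MeasurableSpace E] [PseudoMetricSpace E]
    [SecondCountableTopology E] [CompleteSpace E] [BorelSpace E]
    {μs : ℕ → ProbabilityMeasure E} {μ : ProbabilityMeasure E} (h : Tendsto μs atTop (𝓝 μ)) :
    IsTightMeasureSet (Set.range fun n => (μs n : Measure E)) := by
  have hcomp : IsCompact (closure (Set.range μs)) :=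
    h.isCompact_insert_range.of_isClosed_subset isClosed_closure
      (closure_minimal (Set.subset_insert _ _) h.isCompact_insert_range.isClosed)
  exact (isTightMeasureSet_of_isCompact_closure hcomp).subset
    (Set.range_subset_iff.mpr fun n => ⟨μs n, ⟨n, rfl⟩, rfl⟩)

theorem isTightMeasureSet_range_map_of_tendsto_integral {Ω E : Type*} [MeasurableSpace Ω]
    {P : Measure Ω} [IsProbabilityMeasure P] [MeasurableSpace E] [PseudoMetricSpace E]
    [SecondCountableTopology E] [CompleteSpace E] [BorelSpace E]
    {Z : ℕ → Ω → E} (hZ : ∀ n, AEMeasurable (Z n) P) (ν : Measure E) [IsProbabilityMeasure ν]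
    (h : ∀ ψ : E →ᵇ ℝ, Tendsto (fun n => ∫ ω, ψ (Z n ω) ∂P) atTop (𝓝 (∫ z, ψ z ∂ν))) :
    IsTightMeasureSet (Set.range fun n => P.map (Z n)) := by
  let μs : ℕ → ProbabilityMeasure E := fun n =>
    ⟨P.map (Z n), Measure.isProbabilityMeasure_map (hZ n)⟩
  refine isTightMeasureSet_range_of_tendsto (μs := μs) (μ := ⟨ν, ‹_›⟩) ?_
  refine ProbabilityMeasure.tendsto_iff_forall_integral_tendsto.mpr fun ψ => ?_
  simpa [μs, integral_map (hZ _) ψ.continuous.aestronglyMeasurable] using h ψ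

theorem tendstoInMeasure_smul_of_isLittleO {Ω ι E F : Type*} [MeasurableSpace Ω]
    {P : Measure Ω} {l : Filter ι} [NormedAddCommGroup E] [NormedSpace ℝ E] [MeasurableSpace E]
    [NormedAddCommGroup F] [NormedSpace ℝ F] {c : ι → ℝ} {X : ι → Ω → E} {g : E → F}
    (hc : Tendsto c l atTop) (hX : ∀ i, AEMeasurable (fun ω => c i • X i ω) P)
    (htight : IsTightMeasureSet (Set.range fun i => P.map fun ω => c i • X i ω))
    (hg : g =o[𝓝 0] fun x => x) :
    TendstoInMeasure P (fun i ω => c i • g (X i ω)) l 0 := by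
  rw [tendstoInMeasure_iff_norm]
  intro ε hε
  rw [ENNReal.tendsto_nhds_zero]
  intro δ hδ
  obtain ⟨M, hM⟩ := ((tendsto_measure_norm_gt_of_isTightMeasureSet htight).eventually
    (ge_mem_nhds hδ)).exists
  filter_upwards [hc.eventually (hg.eventually_norm_smul_lt hε M)] with i hi
  calc P {ω | ε ≤ ‖c i • g (X i ω) - (0 : Ω → F) ω‖}
      ≤ P ((fun ω => c i • X i ω) ⁻¹' {x | M < ‖x‖}) := by
        refine measure_mono fun ω hω => ?_
        simp only [Set.mem_ofPred_eq, Pi.zero_apply, sub_zero] at hω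
        exact not_le.mp fun h => (hi _ h).not_ge hω
    _ ≤ P.map (fun ω => c i • X i ω) {x | M < ‖x‖} := Measure.le_map_apply (hX i) _
    _ ≤ ⨆ μ ∈ Set.range (fun i => P.map fun ω => c i • X i ω), μ {x | M < ‖x‖} :=
        le_iSup₂_of_le _ ⟨i, rfl⟩ le_rfl
    _ ≤ δ := hM

end MeasureTheory

theorem hasFDerivAt_bregmanVec {φ : ℝ → ℝ} {M₀ : ℕ} {p q : Fin M₀ → ℝ}
    (hp : ∀ i, DifferentiableAt ℝ φ (p i)) (hq : ∀ i, DifferentiableAt ℝ φ (q i))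
    (hq' : ∀ i, DifferentiableAt ℝ (deriv φ) (q i)) :
    HasFDerivAt (fun x : (Fin M₀ → ℝ) × (Fin M₀ → ℝ) => bregmanVec φ x.1 x.2)
      (∑ i, ((deriv φ (p i) - deriv φ (q i)) •
          (ContinuousLinearMap.proj (R := ℝ) (φ := fun _ : Fin M₀ => ℝ) i).comp
            (ContinuousLinearMap.fst ℝ _ _)
        - ((p i - q i) * deriv (deriv φ) (q i)) •
          (ContinuousLinearMap.proj (R := ℝ) (φ := fun _ : Fin M₀ => ℝ) i).comp
            (ContinuousLinearMap.snd ℝ _ _))) (p, q) := by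
  unfold bregmanVec
  refine HasFDerivAt.fun_sum fun i _ => ?_
  set a : (Fin M₀ → ℝ) × (Fin M₀ → ℝ) →L[ℝ] ℝ :=
    (ContinuousLinearMap.proj i).comp (ContinuousLinearMap.fst ℝ _ _)
  set b : (Fin M₀ → ℝ) × (Fin M₀ → ℝ) →L[ℝ] ℝ :=
    (ContinuousLinearMap.proj i).comp (ContinuousLinearMap.snd ℝ _ _)
  have hφa := (hp i).hasDerivAt.comp_hasFDerivAt (p, q) a.hasFDerivAt
  have hφb := (hq i).hasDerivAt.comp_hasFDerivAt (p, q) b.hasFDerivAt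
  have hφ'b := (hq' i).hasDerivAt.comp_hasFDerivAt (p, q) b.hasFDerivAt
  refine ((hφa.fun_sub hφb).fun_sub
    ((a.hasFDerivAt.fun_sub b.hasFDerivAt).fun_mul hφ'b)).congr_fderiv ?_
  refine ContinuousLinearMap.ext fun x => ?_
  simp only [a, b, sub_apply, add_apply, smul_apply, smul_eq_mul, Function.comp_apply,
    ContinuousLinearMap.comp_apply, ContinuousLinearMap.coe_fst', ContinuousLinearMap.coe_snd',
    ContinuousLinearMap.proj_apply]
  ring

theorem isLittleO_bregmanVec_taylor_remainder {φ : ℝ → ℝ} {M₀ : ℕ} {p q : Fin M₀ → ℝ}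
    (hp : ∀ i, DifferentiableAt ℝ φ (p i)) (hq : ∀ i, DifferentiableAt ℝ φ (q i))
    (hq' : ∀ i, DifferentiableAt ℝ (deriv φ) (q i)) :
    (fun h : (Fin M₀ → ℝ) × (Fin M₀ → ℝ) =>
      bregmanVec φ (p + h.1) (q + h.2) - bregmanVec φ p q
        - ∑ i, (deriv φ (p i) - deriv φ (q i)) * h.1 i
        - ∑ i, -(p i - q i) * deriv (deriv φ) (q i) * h.2 i) =o[𝓝 0] fun h => h := by
  refine (hasFDerivAt_iff_isLittleO_nhds_zero.mp
    (hasFDerivAt_bregmanVec hp hq hq')).congr_left fun h => ?_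
  simp only [Prod.fst_add, Prod.snd_add, sub_apply, sum_apply, smul_apply, smul_eq_mul,
    ContinuousLinearMap.comp_apply, ContinuousLinearMap.coe_fst', ContinuousLinearMap.coe_snd',
    ContinuousLinearMap.proj_apply, Finset.sum_sub_distrib, neg_mul, Finset.sum_neg_distrib]
  ring

theorem bregman_taylor_expansion_general
    {Ω : Type*} [MeasurableSpace Ω] (P : Measure Ω) [IsProbabilityMeasure P]
    (M₀ : ℕ)
    (φ : ℝ → ℝ) (hφC2 : ContDiff ℝ 2 φ)
    (F G : Fin M₀ → ℝ)
    -- the sequences of random vectors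
    (Phat Qhat : ℕ → Ω → (Fin M₀ → ℝ))
    (hPmeas : ∀ n, Measurable (Phat n)) (hQmeas : ∀ n, Measurable (Qhat n))
    -- √n((P̂ₙ − F),(Q̂ₙ − G)) converges in distribution to some probability law ν
    (ν : Measure ((Fin M₀ ⊕ Fin M₀) → ℝ)) [IsProbabilityMeasure ν]
    (hconv : ∀ g : BoundedContinuousFunction ((Fin M₀ ⊕ Fin M₀) → ℝ) ℝ,
      Tendsto
        (fun n : ℕ => ∫ ω,
          g (Sum.elim (fun i => Real.sqrt n * (Phat n ω i - F i))
              (fun i => Real.sqrt n * (Qhat n ω i - G i))) ∂P)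
        atTop (𝓝 (∫ z, g z ∂ν)))
    -- the gradient vectors K and N of D at (F,G)
    (K N : Fin M₀ → ℝ)
    (hK : ∀ i, K i = deriv φ (F i) - deriv φ (G i))
    (hN : ∀ i, N i = -(F i - G i) * deriv (deriv φ) (G i)) :
    -- conclusion: √n·Rₙ → 0 in probability
    TendstoInMeasure P
      (fun (n : ℕ) (ω : Ω) =>
        Real.sqrt n *
          (bregmanVec φ (Phat n ω) (Qhat n ω) - bregmanVec φ F G
            - ∑ i, K i * (Phat n ω i - F i) - ∑ i, N i * (Qhat n ω i - G i)))
      atTop (fun _ => 0) := by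
  set Z : ℕ → Ω → (Fin M₀ ⊕ Fin M₀) → ℝ := fun n ω =>
    Sum.elim (fun i => Real.sqrt n * (Phat n ω i - F i))
      (fun i => Real.sqrt n * (Qhat n ω i - G i))
  set X : ℕ → Ω → (Fin M₀ → ℝ) × (Fin M₀ → ℝ) := fun n ω => (Phat n ω - F, Qhat n ω - G)
  have hZ : ∀ n, Measurable (Z n) := fun n => measurable_pi_lambda _ <| by
    rintro (i | i) <;> simp only [Z, Sum.elim_inl, Sum.elim_inr] <;> fun_prop
  have hsplit : Continuous fun z : (Fin M₀ ⊕ Fin M₀) → ℝ =>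
      ((fun i => z (.inl i)), fun i => z (.inr i)) := by fun_prop
  have htight : IsTightMeasureSet (Set.range fun n : ℕ => P.map fun ω => √(n : ℝ) • X n ω) := by
    convert (isTightMeasureSet_range_map_of_tendsto_integral (fun n => (hZ n).aemeasurable) ν
      hconv).map hsplit using 1
    rw [← Set.range_comp]
    congr with n : 1
    exact (Measure.map_map hsplit.measurable (hZ n)).symm
  obtain rfl : K = _ := funext hK
  obtain rfl : N = _ := funext hN
  have hremainder := isLittleO_bregmanVec_taylor_remainder (p := F) (q := G)
    (fun i => hφC2.differentiable two_ne_zero _) (fun i => hφC2.differentiable two_ne_zero _)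
    fun i => hφC2.differentiable_deriv_two _
  have hscaled := tendstoInMeasure_smul_of_isLittleO
    (Real.tendsto_sqrt_atTop.comp tendsto_natCast_atTop_atTop)
    (fun n => by simp only [X]; fun_prop) htight hremainder
  convert hscaled using 3 with n ω
  · simp only [X, Function.comp_apply, smul_eq_mul, Pi.sub_apply, add_sub_cancel]
  · rfl

/-- Lemma 3: first-order stochastic Taylor expansion of the
Bregman divergence statistic: if `√n((P̂ₙ − F), (Q̂ₙ − G))` converges in
distribution, then the remainder
`Rₙ = D(P̂ₙ,Q̂ₙ) − D(F,G) − Kᵀ(P̂ₙ − F) − Nᵀ(Q̂ₙ − G)` satisfies `√n Rₙ → 0`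
in probability. -/
theorem bregman_taylor_expansion
    {Ω : Type*} [MeasurableSpace Ω] (P : Measure Ω) [IsProbabilityMeasure P]
    (M₀ : ℕ) (hM₀ : 1 ≤ M₀)
    (φ : ℝ → ℝ) (hφC2 : ContDiff ℝ 2 φ) (hφconv : StrictConvexOn ℝ Set.univ φ)
    (F G : Fin M₀ → ℝ)
    -- the sequences of random vectors
    (Phat Qhat : ℕ → Ω → (Fin M₀ → ℝ))
    (hPmeas : ∀ n, Measurable (Phat n)) (hQmeas : ∀ n, Measurable (Qhat n))
    -- √n((P̂ₙ − F),(Q̂ₙ − G)) converges in distribution to some probability law ν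
    (ν : Measure ((Fin M₀ ⊕ Fin M₀) → ℝ)) [IsProbabilityMeasure ν]
    (hconv : ∀ g : BoundedContinuousFunction ((Fin M₀ ⊕ Fin M₀) → ℝ) ℝ,
      Tendsto
        (fun n : ℕ => ∫ ω,
          g (Sum.elim (fun i => Real.sqrt n * (Phat n ω i - F i))
              (fun i => Real.sqrt n * (Qhat n ω i - G i))) ∂P)
        atTop (𝓝 (∫ z, g z ∂ν)))
    -- the gradient vectors K and N of D at (F,G)
    (K N : Fin M₀ → ℝ)
    (hK : ∀ i, K i = deriv φ (F i) - deriv φ (G i))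
    (hN : ∀ i, N i = -(F i - G i) * deriv (deriv φ) (G i)) :
    -- conclusion: √n·Rₙ → 0 in probability
    TendstoInMeasure P
      (fun (n : ℕ) (ω : Ω) =>
        Real.sqrt n *
          (bregmanVec φ (Phat n ω) (Qhat n ω) - bregmanVec φ F G
            - ∑ i, K i * (Phat n ω i - F i) - ∑ i, N i * (Qhat n ω i - G i)))
      atTop (fun _ => 0) :=
  bregman_taylor_expansion_general P M₀ φ hφC2 F G Phat Qhat hPmeas hQmeas ν hconv K N hK hN
end
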